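/- arXiv:1603.05525 — 8 statements merged into one kernel-verified Lean document; each statement's English description precedes it below -/
import Mathlib

section
/- Very colorful Carathéodory theorem: Let X_1, ..., X_d ⊆ R^d be sets each of whose convex hulls contains a point p, and let q ∈ R^d. Then there exist x_1 ∈ X_1, ..., x_d ∈ X_d such that p ∈ conv{x_1, ..., x_d, q}. -/
/-!
Carathéodory writes `p` as a positive combination of finitely many points `z i k` of each `X i`,
so the vectors `u i k = z i k - p` of color `i` satisfy `∑ k, w i k • u i k = 0` with all
`w i k > 0`. It suffices to find a colorful selection `x` such that `p - q` lies in the cone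
spanned by the vectors `x i - p`.

If some colorful selection is a basis, walk along the segment from a generic point `v₀` in the
interior of its cone to `p - q`. The set of times at which the current point lies in the cone of
some colorful basis is closed, and it extends to the right of each of its points: when a
coordinate reaches zero with negative slope, the zero weighted sum of that color provides a
vector with negative coordinate there, and exchanging it into the basis reverses the slope.
Genericity of `v₀` ensures that only one coordinate vanishes at a time.

In general, a linear perturbation of each color class, depending on a real parameter, keeps the
zero weighted sums and makes a chosen selection a basis for all but finitely many parameters.
The conclusion passes to the limit, since lying in the convex hull of finitely many moving
points is a closed condition.
-/

open Set Filter Topology Module Submodule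

section ConvexHull

variable {E ι : Type*} [AddCommGroup E] [Module ℝ E] [Fintype ι]

lemma convexHull_range_eq_image_stdSimplex (x : ι → E) :
    convexHull ℝ (range x) = (fun w : ι → ℝ => ∑ i, w i • x i) '' stdSimplex ℝ ι := by
  classical
  rw [← convexHull_basis_eq_stdSimplex]
  have := (Fintype.linearCombination ℝ x).image_convexHull
    (range fun i j : ι => if i = j then (1 : ℝ) else 0)
  rw [← range_comp] at this
  convert this.symm using 3
  · ext i
    simp [Fintype.linearCombination_apply]
  · simp [Fintype.linearCombination_apply]

lemma isClosed_setOf_mem_convexHull_range [TopologicalSpace E] [IsTopologicalAddGroup E]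
    [ContinuousSMul ℝ E] [T2Space E] (p : E) :
    IsClosed {x : ι → E | p ∈ convexHull ℝ (range x)} := by
  have hcont : Continuous fun z : (ι → E) × stdSimplex ℝ ι => ∑ i, z.2.1 i • z.1 i :=
    continuous_finsetSum _ fun i _ =>
      ((continuous_apply i).comp (continuous_subtype_val.comp continuous_snd)).smul
        ((continuous_apply i).comp continuous_fst)
  have hset : {x : ι → E | p ∈ convexHull ℝ (range x)} =
      Prod.fst '' {z : (ι → E) × stdSimplex ℝ ι | ∑ i, z.2.1 i • z.1 i = p} := by
    ext x
    simp [convexHull_range_eq_image_stdSimplex]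
  rw [hset]
  exact isClosedMap_fst_of_compactSpace _ (isClosed_eq hcont continuous_const)

lemma isClosed_setOf_exists_mem_convexHull_insert_range [TopologicalSpace E]
    [IsTopologicalAddGroup E] [ContinuousSMul ℝ E] [T2Space E] {X K : Type*} [TopologicalSpace X]
    [Finite K] {g : K → X → ι → E} (hg : ∀ k, Continuous (g k)) (p q : E) :
    IsClosed {t : X | ∃ k, p ∈ convexHull ℝ (insert q (range (g k t)))} := by
  simp only [← Option.range_elim, ofPred_exists]
  refine isClosed_iUnion_of_finite fun k => (isClosed_setOf_mem_convexHull_range p).preimage ?_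
  exact continuous_pi fun o => o.casesOn continuous_const fun i => (continuous_apply i).comp (hg k)

lemma mem_convexHull_insert_of_sub_eq_sum {p q : E} {x : ι → E} {c : ι → ℝ}
    (hc : ∀ i, 0 ≤ c i) (h : p - q = ∑ i, c i • (x i - p)) :
    p ∈ convexHull ℝ (insert q (range x)) := by
  have hpos : 0 < 1 + ∑ i, c i := by
    linarith [Finset.sum_nonneg fun i (_ : i ∈ Finset.univ) => hc i]
  -- `p = (q + ∑ i, c i • x i) / (1 + ∑ i, c i)`
  rw [← Option.range_elim]
  refine mem_convexHull_of_exists_fintype (fun o : Option ι => o.elim 1 c / (1 + ∑ i, c i))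
    (fun o : Option ι => o.elim q x)
    (fun o => by cases o <;> simp [hc, hpos.le, div_nonneg]) ?_ (fun o => mem_range_self o) ?_
  · simp [Fintype.sum_option, ← Finset.sum_div, div_self hpos.ne']
  · simp only [Fintype.sum_option, Option.elim_none, Option.elim_some, div_eq_inv_mul, mul_smul,
      ← Finset.smul_sum]
    rw [inv_smul_eq_iff₀ hpos.ne', add_smul, one_smul]
    simp only [smul_sub, Finset.sum_sub_distrib, ← Finset.sum_smul] at h
    linear_combination (norm := module) -h

end ConvexHull

namespace Module.Basis

variable {ι K V : Type*} [Fintype ι] [DecidableEq ι] [Field K] [AddCommGroup V] [Module K V]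

noncomputable def exchange (b : Basis ι K V) (i : ι) (y : V) (hy : b.repr y i ≠ 0) :
    Basis ι K V :=
  haveI : Nonempty ι := ⟨i⟩
  basisOfLinearIndependentOfCardEqFinrank
    (b.linearIndependent.update i y
      ⟨1, one_mem _, b.repr y, mem_nonZeroDivisors_of_ne_zero hy, by simp⟩)
    (finrank_eq_card_basis b).symm

variable (b : Basis ι K V) {i : ι} {y : V} (hy : b.repr y i ≠ 0)

@[simp]
lemma coe_exchange : ⇑(b.exchange i y hy) = Function.update b i y :=
  haveI : Nonempty ι := ⟨i⟩
  coe_basisOfLinearIndependentOfCardEqFinrank _ _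

lemma repr_exchange_apply_self_mul (z : V) :
    (b.exchange i y hy).repr z i * b.repr y i = b.repr z i := by
  have h := congrArg (b.coord i) ((b.exchange i y hy).sum_repr z)
  simp only [map_sum, map_smul, coord_apply, coe_exchange, smul_eq_mul] at h
  rw [← h, Finset.sum_eq_single i]
  · simp
  · intro j _ hj
    simp [hj]
  · simp

lemma repr_exchange_of_repr_eq_zero {z : V} (hz : b.repr z i = 0) :
    (b.exchange i y hy).repr z = b.repr z := by
  have h : ∑ j, b.repr z j • (b.exchange i y hy) j = z := by
    conv_rhs => rw [← b.sum_repr z]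
    refine Finset.sum_congr rfl fun j _ => ?_
    rcases eq_or_ne j i with rfl | hj
    · simp [hz]
    · simp [Function.update_of_ne hj]
  ext j
  conv_lhs => rw [← h]
  exact congrFun ((b.exchange i y hy).repr_sum_self _) j

end Module.Basis

lemma exists_dual_apply_eq_one {K V : Type*} [Field K] [AddCommGroup V] [Module K V] {v : V}
    (hv : v ≠ 0) : ∃ f : Dual K V, f v = 1 := by
  obtain ⟨φ, hφ⟩ : ∃ φ : Dual K V, φ v ≠ 0 := by
    by_contra! h
    exact hv ((forall_dual_apply_eq_zero_iff K v).1 h)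
  exact ⟨(φ v)⁻¹ • φ, by rw [LinearMap.smul_apply, smul_eq_mul, inv_mul_cancel₀ hφ]⟩

lemma exists_neg_of_sum_smul_eq_zero {κ V : Type*} [Fintype κ] [AddCommGroup V] [Module ℝ V]
    {y : κ → V} {w : κ → ℝ} (hw : ∀ k, 0 < w k) (hy : ∑ k, w k • y k = 0) (φ : V →ₗ[ℝ] ℝ)
    {k₀ : κ} (hk₀ : 0 < φ (y k₀)) : ∃ k, φ (y k) < 0 := by
  by_contra! h
  have hpos : 0 < ∑ k, w k * φ (y k) :=
    Finset.sum_pos' (fun k _ => mul_nonneg (hw k).le (h k))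
      ⟨k₀, Finset.mem_univ _, mul_pos (hw k₀) hk₀⟩
  have hzero : ∑ k, w k * φ (y k) = 0 := by simpa using congrArg φ hy
  exact hpos.ne' hzero

lemma eventually_nonneg_add_sub_mul {a β s : ℝ} (ha : 0 ≤ a) (hβ : a = 0 → 0 ≤ β) :
    ∀ᶠ t in 𝓝[>] s, 0 ≤ a + (t - s) * β := by
  rcases ha.eq_or_lt with rfl | ha
  · filter_upwards [self_mem_nhdsWithin] with t (ht : s < t)
    nlinarith [hβ rfl]
  · have hcont : Continuous fun t => a + (t - s) * β := by fun_prop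
    exact nhdsWithin_le_nhds <| (hcont.tendsto' s a (by simp)).eventually (eventually_ge_nhds ha)

lemma span_insert_image_compl_pair_ne_top {V ι : Type*} [AddCommGroup V] [Module ℝ V]
    [Fintype ι] (hcard : finrank ℝ V = Fintype.card ι) (x : ι → V) (v : V)
    {i j : ι} (hij : i ≠ j) : span ℝ (insert v (x '' {i, j}ᶜ)) ≠ ⊤ := by
  classical
  intro htop
  let s : Finset V := insert v (({i, j} : Finset ι)ᶜ.image x)
  have hs : (s : Set V) = insert v (x '' {i, j}ᶜ) := by
    simp only [s, Finset.coe_insert, Finset.coe_image, Finset.coe_compl, Finset.coe_singleton]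
  have hspan := finrank_span_finset_le_card (R := ℝ) s
  rw [Set.finrank, hs, htop, finrank_top, hcard] at hspan
  have hs_card : s.card ≤ 1 + (Fintype.card ι - 2) := by
    refine (Finset.card_insert_le _ _).trans ?_
    rw [add_comm]
    gcongr
    refine Finset.card_image_le.trans ?_
    rw [Finset.card_compl, Finset.card_pair hij]
  have hι : 2 ≤ Fintype.card ι := by
    simpa [Finset.card_pair hij] using Finset.card_le_univ ({i, j} : Finset ι)
  omega

lemma exists_mem_forall_notMem_of_ne_top {V M : Type*} [NormedAddCommGroup V] [NormedSpace ℝ V]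
    [FiniteDimensional ℝ V] [Countable M] {W : M → Submodule ℝ V} (hW : ∀ m, W m ≠ ⊤)
    {U : Set V} (hU : IsOpen U) (hne : U.Nonempty) : ∃ x ∈ U, ∀ m, x ∉ W m := by
  have hdense : Dense (⋂ m, ((W m : Set V)ᶜ)) := by
    refine dense_iInter_of_isOpen (fun m => (W m).closed_of_finiteDimensional.isOpen_compl)
      fun m => ?_
    rw [← interior_eq_empty_iff_dense_compl, ← not_nonempty_iff_eq_empty]
    exact fun h => hW m ((W m).eq_top_of_nonempty_interior' h)
  obtain ⟨x, hxU, hx⟩ := hdense.inter_open_nonempty U hU hne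
  exact ⟨x, hxU, by simpa using hx⟩

lemma linearIndependent_add_smul_of_not_hasEigenvalue {V ι : Type*} [AddCommGroup V]
    [Module ℝ V] (e : Basis ι ℝ V) (a : ι → V) {ε : ℝ}
    (hε : ¬End.HasEigenvalue (e.constr ℝ a) (-ε)) :
    LinearIndependent ℝ fun i => a i + ε • e i := by
  classical
  have hker : LinearMap.ker (e.constr ℝ a - (-ε) • 1) = ⊥ := by
    rw [← End.eigenspace_def]
    exact not_not.1 (mt End.hasEigenvalue_iff.2 hε)
  have h := e.linearIndependent.map' _ hker
  have heq : ⇑(e.constr ℝ a - (-ε) • 1) ∘ ⇑e = fun i => a i + ε • e i := by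
    ext i
    simp [sub_eq_add_neg]
  rwa [heq] at h

section Colorful

variable {V ι : Type*} {κ : ι → Type*}

def IsColorful (u : ∀ i, κ i → V) (x : ι → V) : Prop := ∀ i, x i ∈ range (u i)

lemma finite_setOf_isColorful [Finite ι] [∀ i, Finite (κ i)] (u : ∀ i, κ i → V) :
    {x : ι → V | IsColorful u x}.Finite :=
  (Set.Finite.pi fun i => finite_range (u i)).subset fun _ hx i _ => hx i

variable [AddCommGroup V] [Module ℝ V] {u : ∀ i, κ i → V}

lemma eq_of_repr_eq_zero_of_repr_eq_zero {v₀ v : V}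
    (hgen : ∀ x, IsColorful u x → ∀ i j, i ≠ j → v₀ ∉ span ℝ (insert v (x '' {i, j}ᶜ)))
    {t : ℝ} (ht : t < 1) {b : Basis ι ℝ V} (hb : IsColorful u b) {i j : ι}
    (hi : b.repr (v₀ + t • (v - v₀)) i = 0) (hj : b.repr (v₀ + t • (v - v₀)) j = 0) : i = j := by
  by_contra hij
  set W := span ℝ (insert v (b '' {i, j}ᶜ))
  have hmem : v₀ + t • (v - v₀) ∈ W := by
    refine span_mono (subset_insert _ _) (b.mem_span_image.2 fun l hl => ?_)
    rintro (rfl | rfl) <;> simp_all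
  have hv : v ∈ W := subset_span (mem_insert _ _)
  have hv₀ : v₀ = (1 - t)⁻¹ • ((v₀ + t • (v - v₀)) - t • v) := by
    rw [eq_inv_smul_iff₀ (sub_ne_zero.2 ht.ne')]
    module
  exact hgen b hb i j hij (hv₀ ▸ W.smul_mem _ (W.sub_mem hmem (W.smul_mem t hv)))

variable [Fintype ι] [∀ i, Fintype (κ i)] {w : ∀ i, κ i → ℝ}

lemma exists_isColorful_exchange (hw : ∀ i k, 0 < w i k) (hu : ∀ i, ∑ k, w i k • u i k = 0)
    {b : Basis ι ℝ V} (hb : IsColorful u b) {i : ι} {z d : V}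
    (hz : b.repr z i = 0) (hd : b.repr d i < 0) :
    ∃ b' : Basis ι ℝ V, IsColorful u b' ∧ b'.repr z = b.repr z ∧ 0 < b'.repr d i := by
  classical
  obtain ⟨k₀, hk₀⟩ := hb i
  obtain ⟨k, hk⟩ : ∃ k, b.repr (u i k) i < 0 :=
    exists_neg_of_sum_smul_eq_zero (hw i) (hu i) (b.coord i) (k₀ := k₀) (by simp [hk₀])
  have hne : b.repr (u i k) i ≠ 0 := hk.ne
  refine ⟨b.exchange i (u i k) hne, fun j => ?_, b.repr_exchange_of_repr_eq_zero hne hz, ?_⟩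
  · rcases eq_or_ne j i with rfl | hj
    · simp
    · simpa [Function.update_of_ne hj] using hb j
  · have := b.repr_exchange_apply_self_mul hne d
    nlinarith

lemma eventually_exists_isColorful_repr_nonneg (hw : ∀ i k, 0 < w i k)
    (hu : ∀ i, ∑ k, w i k • u i k = 0) {v₀ v : V}
    (hgen : ∀ x, IsColorful u x → ∀ i j, i ≠ j → v₀ ∉ span ℝ (insert v (x '' {i, j}ᶜ)))
    {t : ℝ} (ht : t < 1) {b : Basis ι ℝ V} (hb : IsColorful u b)
    (hbt : ∀ j, 0 ≤ b.repr (v₀ + t • (v - v₀)) j) :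
    ∀ᶠ s in 𝓝[>] t, ∃ b : Basis ι ℝ V, IsColorful u b ∧
      ∀ j, 0 ≤ b.repr (v₀ + s • (v - v₀)) j := by
  have hpath : ∀ s : ℝ, v₀ + s • (v - v₀) = (v₀ + t • (v - v₀)) + (s - t) • (v - v₀) := by
    intro s
    module
  suffices ∃ b : Basis ι ℝ V, IsColorful u b ∧ ∀ j, 0 ≤ b.repr (v₀ + t • (v - v₀)) j ∧
      (b.repr (v₀ + t • (v - v₀)) j = 0 → 0 ≤ b.repr (v - v₀) j) by
    obtain ⟨b, hb, hbj⟩ := this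
    filter_upwards [eventually_all.2 fun j =>
      eventually_nonneg_add_sub_mul (s := t) (hbj j).1 (hbj j).2] with s hs
    exact ⟨b, hb, fun j => by simpa [hpath s] using hs j⟩
  by_cases hslope : ∀ j, b.repr (v₀ + t • (v - v₀)) j = 0 → 0 ≤ b.repr (v - v₀) j
  · exact ⟨b, hb, fun j => ⟨hbt j, hslope j⟩⟩
  push Not at hslope
  obtain ⟨i, hi, hneg⟩ := hslope
  obtain ⟨b', hb', hrepr, hpos⟩ := exists_isColorful_exchange hw hu hb hi hneg
  refine ⟨b', hb', fun j => ⟨hrepr ▸ hbt j, fun hj => ?_⟩⟩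
  rw [hrepr] at hj
  rw [← eq_of_repr_eq_zero_of_repr_eq_zero hgen ht hb hi hj]
  exact hpos.le

end Colorful

section Covering

variable {V : Type*} [NormedAddCommGroup V] [NormedSpace ℝ V] [FiniteDimensional ℝ V]
  {ι : Type*} [Fintype ι] {κ : ι → Type*} [∀ i, Fintype (κ i)]

theorem exists_isColorful_basis_repr_nonneg {u : ∀ i, κ i → V} {w : ∀ i, κ i → ℝ}
    (hw : ∀ i k, 0 < w i k) (hu : ∀ i, ∑ k, w i k • u i k = 0) {b₀ : Basis ι ℝ V}
    (hb₀ : IsColorful u b₀) (v : V) :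
    ∃ b : Basis ι ℝ V, IsColorful u b ∧ ∀ j, 0 ≤ b.repr v j := by
  have : Finite {x // IsColorful u x} := (finite_setOf_isColorful u).to_subtype
  have hU : IsOpen {z : V | ∀ j, 0 < b₀.repr z j} := by
    simp only [ofPred_forall]
    exact isOpen_iInter_of_finite fun j =>
      isOpen_lt continuous_const (b₀.coord j).continuous_of_finiteDimensional
  obtain ⟨v₀, hv₀, hgen⟩ := exists_mem_forall_notMem_of_ne_top
    (W := fun m : {x // IsColorful u x} × {ij : ι × ι // ij.1 ≠ ij.2} =>
      span ℝ (insert v (m.1.1 '' {m.2.1.1, m.2.1.2}ᶜ)))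
    (fun m => span_insert_image_compl_pair_ne_top (finrank_eq_card_basis b₀) _ _ m.2.2) hU
    ⟨∑ j, b₀ j, fun j => by simp⟩
  let G := {t : ℝ | ∃ b : Basis ι ℝ V, IsColorful u b ∧ ∀ j, 0 ≤ b.repr (v₀ + t • (v - v₀)) j}
  have hG : IsClosed G := by
    have hfin : {b : Basis ι ℝ V | IsColorful u b}.Finite :=
      (finite_setOf_isColorful u).preimage DFunLike.coe_injective.injOn
    have : G = ⋃ b ∈ {b : Basis ι ℝ V | IsColorful u b},
        {t : ℝ | ∀ j, 0 ≤ b.repr (v₀ + t • (v - v₀)) j} := by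
      ext t
      simp [G]
    rw [this]
    refine hfin.isClosed_biUnion fun b _ => ?_
    simp only [ofPred_forall]
    exact isClosed_iInter fun j => isClosed_le continuous_const
      ((b.coord j).continuous_of_finiteDimensional.comp (by fun_prop))
  have hsub := (hG.inter isClosed_Icc).Icc_subset_of_forall_mem_nhdsWithin (a := 0) (b := 1)
    ⟨b₀, hb₀, by simpa using fun j => (hv₀ j).le⟩
    fun t ⟨⟨b, hb, hbt⟩, ht⟩ => eventually_exists_isColorful_repr_nonneg hw hu
      (fun x hx i j hij => hgen (⟨x, hx⟩, ⟨(i, j), hij⟩)) ht.2 hb hbt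
  obtain ⟨b, hb, hbv⟩ := hsub ⟨zero_le_one, le_rfl⟩
  exact ⟨b, hb, by simpa using hbv⟩

theorem exists_mem_convexHull_insert_of_sum_smul_sub_eq_zero
    (hcard : finrank ℝ V = Fintype.card ι) {z : ∀ i, κ i → V} {w : ∀ i, κ i → ℝ} {p : V}
    (hw : ∀ i k, 0 < w i k) (hz : ∀ i, ∑ k, w i k • (z i k - p) = 0) {k₀ : ∀ i, κ i}
    (hk₀ : ∀ i, z i (k₀ i) ≠ p) (q : V) :
    ∃ k : ∀ i, κ i, p ∈ convexHull ℝ (insert q (range fun i => z i (k i))) := by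
  let e : Basis ι ℝ V := (finBasisOfFinrankEq ℝ V hcard).reindex (Fintype.equivFin ι).symm
  choose f hf using fun i => exists_dual_apply_eq_one (K := ℝ) (sub_ne_zero.2 (hk₀ i))
  -- `T ε i` keeps the weighted sum of color `i` zero and moves `z i (k₀ i) - p` by `ε • e i`,
  -- so the selection `k₀` becomes a basis unless `-ε` is an eigenvalue of `A` below.
  let T : ℝ → ι → V →ₗ[ℝ] V := fun ε i => LinearMap.id + ε • (f i).smulRight (e i)
  let F := {ε : ℝ | ∃ k : ∀ i, κ i,
    p ∈ convexHull ℝ (insert q (range fun i => p + T ε i (z i (k i) - p)))}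
  have hF : IsClosed F := isClosed_setOf_exists_mem_convexHull_insert_range (fun k =>
    continuous_pi fun i => by
      simp only [T, LinearMap.add_apply, LinearMap.smul_apply, LinearMap.smulRight_apply,
        LinearMap.id_apply]
      fun_prop) p q
  let A : End ℝ V := e.constr ℝ fun i => z i (k₀ i) - p
  have hgood : ∀ ε, ¬End.HasEigenvalue A (-ε) → ε ∈ F := by
    intro ε hε
    let u : ∀ i, κ i → V := fun i k => T ε i (z i k - p)
    have hu : ∀ i, ∑ k, w i k • u i k = 0 := fun i => by
      simp only [u, ← map_smul, ← map_sum, hz, map_zero]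
    let b₀ := basisOfLinearIndependentOfCardEqFinrank' _
      (linearIndependent_add_smul_of_not_hasEigenvalue e _ hε) hcard.symm
    have hb₀ : IsColorful u b₀ := fun i => ⟨k₀ i, by
      simp only [u, T, b₀, coe_basisOfLinearIndependentOfCardEqFinrank', LinearMap.add_apply,
        LinearMap.id_apply, LinearMap.smul_apply, LinearMap.smulRight_apply, hf, one_smul]⟩
    obtain ⟨b, hb, hbv⟩ := exists_isColorful_basis_repr_nonneg hw hu hb₀ (p - q)
    choose k hk using hb
    refine ⟨k, mem_convexHull_insert_of_sub_eq_sum hbv ?_⟩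
    simp only [add_sub_cancel_left, u] at hk ⊢
    simp only [hk, b.sum_repr]
  have hdense : Dense F :=
    (((End.finite_hasEigenvalue A).preimage neg_injective.injOn).countable.dense_compl ℝ).mono
      fun ε hε => hgood ε hε
  obtain ⟨k, hk⟩ : (0 : ℝ) ∈ F := hF.closure_eq ▸ hdense.closure_eq ▸ mem_univ 0
  exact ⟨k, by simpa [T] using hk⟩

theorem exists_mem_convexHull_insert_range_of_forall_mem_convexHull
    (hcard : finrank ℝ V = Fintype.card ι) {X : ι → Set V} {p : V}
    (hp : ∀ i, p ∈ convexHull ℝ (X i)) (q : V) :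
    ∃ x : ι → V, (∀ i, x i ∈ X i) ∧ p ∈ convexHull ℝ (insert q (range x)) := by
  classical
  by_cases hpX : ∃ i, p ∈ X i
  · obtain ⟨i, hi⟩ := hpX
    have hne : ∀ j, (X j).Nonempty := fun j => convexHull_nonempty_iff.1 ⟨p, hp j⟩
    refine ⟨Function.update (fun j => (hne j).some) i p, fun j => ?_,
      subset_convexHull ℝ _ (mem_insert_of_mem _ ⟨i, by simp⟩)⟩
    rcases eq_or_ne j i with rfl | hj
    · simpa using hi
    · simpa [Function.update_of_ne hj] using (hne j).some_mem
  push Not at hpX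
  choose κ _ z w hzX _ hw hw₁ hwz using fun i => eq_pos_convex_span_of_mem_convexHull (hp i)
  have hκ : ∀ i, Nonempty (κ i) := fun i =>
    Finset.univ_nonempty_iff.1 (Finset.nonempty_of_sum_ne_zero (f := w i) (by simp [hw₁ i]))
  have hz : ∀ i, ∑ k, w i k • (z i k - p) = 0 := fun i => by
    simp [smul_sub, Finset.sum_sub_distrib, hwz, ← Finset.sum_smul, hw₁]
  obtain ⟨k, hk⟩ := exists_mem_convexHull_insert_of_sum_smul_sub_eq_zero hcard hw hz
    (k₀ := fun i => (hκ i).some) (fun i h => hpX i (h ▸ hzX i ⟨_, rfl⟩)) q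
  exact ⟨_, fun i => hzX i ⟨k i, rfl⟩, hk⟩

end Covering

/-- Very colorful Carathéodory theorem (Bárány). -/
theorem very_colorful_caratheodory (d : ℕ) (X : Fin d → Set (Fin d → ℝ))
    (p q : Fin d → ℝ) (hp : ∀ i, p ∈ convexHull ℝ (X i)) :
    ∃ x : Fin d → (Fin d → ℝ), (∀ i, x i ∈ X i) ∧
      p ∈ convexHull ℝ (insert q (Set.range x)) :=
  exists_mem_convexHull_insert_range_of_forall_mem_convexHull (by simp) hp q
end

section
/- Optimality of nd in the colorful quantitative Carathéodory lemma: for every d ≥ 1 and every n-vertex polytope K in R^d in general position, there exist nd−1 sets X_1, ..., X_{nd−1} ⊆ R^d whose convex hulls each contain K, but such that no colorful choice x_i ∈ X_i satisfies K ⊆ conv{x_1, ..., x_{nd−1}}. -/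
/-!
Each vertex `y l` is exposed by a functional `f l`. Replace `y l` by a small simplex `w l` of `d`
points with centroid `y l`, lying in the supporting hyperplane `f l = f l (y l)` and so close to
`y l` that it stays strictly below every other supporting hyperplane, and let every `X i` be the
set of all `n * d` points. Its hull contains every vertex. If the hull of a choice `x` contains
`y l`, only points of the face `f l = f l (y l)`, i.e. of `w l`, can carry weight; as all
barycentric coordinates of a centroid are nonzero, all of `w l` must be chosen. So `n * d - 1`
picks would have to hit all `n * d` points.
-/

open Set Finset Module Filter Topology Function

theorem Fintype.card_le_of_injective_of_range_subset {α β γ : Type*} [Fintype α] [Fintype γ]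
    {g : α → β} (hg : Injective g) {x : γ → β} (h : range g ⊆ range x) :
    Fintype.card α ≤ Fintype.card γ := by
  choose e he using fun a => h (mem_range_self a)
  exact Fintype.card_le_of_injective e fun a b hab => hg (by rw [← he a, ← he b, hab])

section Affine

variable {k V P V₂ P₂ ι : Type*} [Field k] [CharZero k] [AddCommGroup V] [Module k V]
  [AddTorsor V P] [AddCommGroup V₂] [Module k V₂] [AddTorsor V₂ P₂]

theorem AffineMap.map_centroid (φ : P →ᵃ[k] P₂) {s : Finset ι} (hs : s.Nonempty) (q : ι → P) :
    φ (s.centroid k q) = s.centroid k (φ ∘ q) :=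
  s.map_affineCombination q _ (s.sum_centroidWeights_eq_one_of_nonempty k hs) φ

end Affine

section Kernel

variable {𝕜 E ι : Type*} [Field 𝕜] [AddCommGroup E] [Module 𝕜 E] [FiniteDimensional 𝕜 E]
  [Fintype ι]

theorem LinearMap.finrank_le_finrank_ker_add_one (f : E →ₗ[𝕜] 𝕜) :
    finrank 𝕜 E ≤ finrank 𝕜 (LinearMap.ker f) + 1 := by
  have h := LinearMap.finrank_range_add_finrank_ker f
  have hrange := Submodule.finrank_le (LinearMap.range f)
  rw [finrank_self] at hrange
  omega

theorem exists_affineIndependent_forall_apply_eq_zero (f : E →ₗ[𝕜] 𝕜)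
    (h : Fintype.card ι ≤ finrank 𝕜 E) :
    ∃ q : ι → E, AffineIndependent 𝕜 q ∧ ∀ i, f (q i) = 0 := by
  classical
  rcases isEmpty_or_nonempty ι with _ | ⟨⟨i₀⟩⟩
  · exact ⟨0, affineIndependent_of_subsingleton 𝕜 _, isEmptyElim⟩
  have hcard : Fintype.card {i // i ≠ i₀} ≤ finrank 𝕜 (LinearMap.ker f) := by
    have hne : Fintype.card {i // i ≠ i₀} = Fintype.card ι - 1 := by
      simp [Fintype.card_subtype_compl]
    have := f.finrank_le_finrank_ker_add_one
    omega
  obtain ⟨v, hv⟩ := exists_linearIndependent_of_le_finrank hcard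
  let v' : {i // i ≠ i₀} → E := fun i => v (Fintype.equivFin _ i)
  have hv' : LinearIndependent 𝕜 v' :=
    (hv.comp _ (Fintype.equivFin _).injective).map' _ (LinearMap.ker f).ker_subtype
  let q : ι → E := fun i => if hi : i = i₀ then 0 else v' ⟨i, hi⟩
  have hqv : (fun i : {i // i ≠ i₀} => q i -ᵥ q i₀) = v' := by
    ext i
    simp [q, i.2]
  refine ⟨q, ?_, fun i => ?_⟩
  · rw [affineIndependent_iff_linearIndependent_vsub 𝕜 _ i₀, hqv]
    exact hv'
  · dsimp only [q]
    split_ifs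
    · exact map_zero f
    · exact (v _).2

variable [CharZero 𝕜] [Nonempty ι]

theorem exists_affineIndependent_centroid_eq_forall_apply_eq (f : E →ₗ[𝕜] 𝕜) (p : E)
    (h : Fintype.card ι ≤ finrank 𝕜 E) :
    ∃ u : ι → E, AffineIndependent 𝕜 u ∧ univ.centroid 𝕜 u = p ∧ ∀ i, f (u i) = f p := by
  obtain ⟨q, hq, hq0⟩ := exists_affineIndependent_forall_apply_eq_zero f h
  set c := univ.centroid 𝕜 q
  have hc : f c = 0 := by
    have : affineSpan 𝕜 (range q) ≤ (LinearMap.ker f).toAffineSubspace :=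
      affineSpan_le.2 (range_subset_iff.2 hq0)
    exact this (centroid_mem_affineSpan_of_nonempty 𝕜 q univ_nonempty)
  let e := AffineEquiv.constVAdd 𝕜 E (p - c)
  refine ⟨e ∘ q, e.affineIndependent_iff.2 hq, ?_, fun i => ?_⟩
  · rw [← AffineEquiv.coe_toAffineMap, ← e.toAffineMap.map_centroid univ_nonempty]
    simp [e, c]
  · simp [e, hq0, hc]

end Kernel

theorem exists_affineIndependent_centroid_eq_forall_mem_apply_eq {E ι : Type*}
    [NormedAddCommGroup E] [NormedSpace ℝ E] [FiniteDimensional ℝ E] [Fintype ι] [Nonempty ι]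
    (f : E →ₗ[ℝ] ℝ) {p : E} {U : Set E} (hU : U ∈ 𝓝 p) (h : Fintype.card ι ≤ finrank ℝ E) :
    ∃ w : ι → E, AffineIndependent ℝ w ∧ univ.centroid ℝ w = p ∧ ∀ i, w i ∈ U ∧ f (w i) = f p := by
  obtain ⟨u, hu, hup, huf⟩ := exists_affineIndependent_centroid_eq_forall_apply_eq f p h
  have hsmall : ∀ᶠ t in 𝓝[≠] (0 : ℝ), ∀ i, AffineMap.homothety p t (u i) ∈ U := by
    refine eventually_nhdsWithin_of_eventually_nhds (eventually_all.2 fun i => ?_)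
    have hcont : Continuous fun t : ℝ => AffineMap.homothety p t (u i) :=
      AffineMap.lineMap_continuous
    exact hcont.continuousAt.eventually_mem (by simpa using hU)
  obtain ⟨t, ht, ht0⟩ := (hsmall.and self_mem_nhdsWithin).exists
  let e := AffineEquiv.homothetyUnitsMulHom p (Units.mk0 t ht0)
  refine ⟨e ∘ u, e.affineIndependent_iff.2 hu, ?_, fun i => ⟨ht i, ?_⟩⟩
  · rw [← AffineEquiv.coe_toAffineMap, ← e.toAffineMap.map_centroid univ_nonempty, hup]
    simp [e]
  · simp [e, AffineMap.homothety_apply, huf]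

section Convex

variable {𝕜 E ι : Type*} [Field 𝕜] [LinearOrder 𝕜] [IsStrictOrderedRing 𝕜] [AddCommGroup E]
  [Module 𝕜 E]

theorem mem_convexHull_inter_setOf_apply_eq (f : E →ₗ[𝕜] 𝕜) {T : Set E} {p : E}
    (hT : ∀ z ∈ T, f z ≤ f p) (hp : p ∈ convexHull 𝕜 T) :
    p ∈ convexHull 𝕜 (T ∩ {z | f z = f p}) := by
  classical
  obtain ⟨ι, _, w, z, hw₀, hw₁, hz, hp⟩ := mem_convexHull_iff_exists_fintype.1 hp
  have hgap : ∑ i, w i * (f p - f (z i)) = 0 := by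
    simp [mul_sub, sum_sub_distrib, ← sum_mul, hw₁, ← hp, map_sum]
  have hface : ∀ i, w i ≠ 0 → f (z i) = f p := by
    intro i hi
    have hgap_i := (Fintype.sum_eq_zero_iff_of_nonneg fun j =>
      mul_nonneg (hw₀ j) (sub_nonneg.2 (hT _ (hz j)))).1 hgap
    exact (sub_eq_zero.1 ((mul_eq_zero.1 (congrFun hgap_i i)).resolve_left hi)).symm
  have hpos : 0 < ∑ i with w i ≠ 0, w i := by rw [sum_filter_ne_zero, hw₁]; exact one_pos
  have hmem := centerMass_mem_convexHull (s := T ∩ {z | f z = f p}) _ (fun i _ => hw₀ i) hpos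
    fun i hi => ⟨hz i, hface i (mem_filter.1 hi).2⟩
  rwa [centerMass_filter_ne_zero, centerMass_eq_of_sum_1 _ _ hw₁, hp] at hmem

theorem AffineIndependent.range_subset_of_centroid_mem_convexHull [Fintype ι] [Nonempty ι]
    {w : ι → E} (hw : AffineIndependent 𝕜 w) {S : Set E} (hS : S ⊆ range w)
    (h : univ.centroid 𝕜 w ∈ convexHull 𝕜 S) : range w ⊆ S := by
  rintro _ ⟨i, rfl⟩
  by_contra hi
  rw [← image_preimage_eq_of_subset hS] at h
  have := hw.eq_zero_of_affineCombination_mem_affineSpan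
    (univ.sum_centroidWeights_eq_one_of_nonempty 𝕜 univ_nonempty)
    (convexHull_subset_affineSpan _ h) (mem_univ i) hi
  simp at this

theorem AffineIndependent.range_subset_of_centroid_mem_convexHull_of_forall_le [Fintype ι]
    [Nonempty ι] {w : ι → E} (hw : AffineIndependent 𝕜 w) (f : E →ₗ[𝕜] 𝕜) {p : E}
    (hp : univ.centroid 𝕜 w = p) {T : Set E} (hT : ∀ z ∈ T, f z ≤ f p)
    (hTw : ∀ z ∈ T, f z = f p → z ∈ range w) (h : p ∈ convexHull 𝕜 T) : range w ⊆ T := by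
  refine (hw.range_subset_of_centroid_mem_convexHull (fun z hz => hTw z hz.1 hz.2) ?_).trans
    inter_subset_left
  rw [hp]
  exact mem_convexHull_inter_setOf_apply_eq f hT h

end Convex

section ExposedSimplices

variable {𝕜 E ι κ : Type*} [Field 𝕜] [LinearOrder 𝕜] [AddCommGroup E] [Module 𝕜 E] [Fintype κ]

structure IsExposedSimplices (f : ι → E →ₗ[𝕜] 𝕜) (y : ι → E) (w : ι → κ → E) : Prop where
  affineIndependent (l : ι) : AffineIndependent 𝕜 (w l)
  centroid_eq (l : ι) : univ.centroid 𝕜 (w l) = y l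
  apply_eq (l : ι) (k : κ) : f l (w l k) = f l (y l)
  apply_lt (l l' : ι) (k : κ) : l' ≠ l → f l (w l' k) < f l (y l)

namespace IsExposedSimplices

variable {f : ι → E →ₗ[𝕜] 𝕜} {y : ι → E} {w : ι → κ → E}

theorem injective_uncurry (hw : IsExposedSimplices f y w) : Injective (uncurry w) := by
  rintro ⟨l, k⟩ ⟨l', k'⟩ h
  obtain rfl | hl := eq_or_ne l' l
  · rw [(hw.affineIndependent l').injective (show w l' k = w l' k' from h)]
  · have hlt := hw.apply_lt l l' k' hl
    rw [← show w l k = w l' k' from h, hw.apply_eq] at hlt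
    exact absurd hlt (lt_irrefl _)

variable [IsStrictOrderedRing 𝕜] [Nonempty κ]

theorem range_subset_convexHull (hw : IsExposedSimplices f y w) :
    range y ⊆ convexHull 𝕜 (range (uncurry w)) := by
  rintro _ ⟨l, rfl⟩
  rw [← hw.centroid_eq l]
  refine convexHull_mono (range_subset_iff.2 fun k => mem_range_self (l, k)) ?_
  exact affineCombination_mem_convexHull (fun _ _ => by simp)
    (sum_centroidWeights_eq_one_of_nonempty 𝕜 _ univ_nonempty)

theorem range_uncurry_subset (hw : IsExposedSimplices f y w) {T : Set E}
    (hT : T ⊆ range (uncurry w)) (hyT : range y ⊆ convexHull 𝕜 T) : range (uncurry w) ⊆ T := by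
  have hface (l : ι) :
      ∀ z ∈ T, f l z ≤ f l (y l) ∧ (f l z = f l (y l) → z ∈ range (w l)) := by
    intro z hz
    obtain ⟨⟨l', k⟩, rfl⟩ := hT hz
    obtain rfl | hl := eq_or_ne l' l
    · exact ⟨(hw.apply_eq l' k).le, fun _ => mem_range_self k⟩
    · exact ⟨(hw.apply_lt l l' k hl).le, fun h => absurd h (hw.apply_lt l l' k hl).ne⟩
  rintro _ ⟨⟨l, k⟩, rfl⟩
  exact (hw.affineIndependent l).range_subset_of_centroid_mem_convexHull_of_forall_le (f l)
    (hw.centroid_eq l) (fun z hz => (hface l z hz).1) (fun z hz => (hface l z hz).2)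
    (hyT (mem_range_self l)) (mem_range_self k)

end IsExposedSimplices

end ExposedSimplices

theorem exists_forall_lt_of_mem_extremePoints_convexHull {E : Type*} [NormedAddCommGroup E]
    [NormedSpace ℝ E] {S : Set E} (hS : S.Finite) {x : E}
    (hx : x ∈ (convexHull ℝ S).extremePoints ℝ) :
    ∃ f : StrongDual ℝ E, ∀ z ∈ S, z ≠ x → f z < f x := by
  have hx' : x ∉ convexHull ℝ (S \ {x}) := fun h =>
    ((convex_convexHull ℝ S).mem_extremePoints_iff_mem_sdiff_convexHull_sdiff.1 hx).2
      (convexHull_mono (sdiff_subset_sdiff_left (subset_convexHull ℝ S)) h)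
  obtain ⟨f, c, hfc, hcx⟩ := geometric_hahn_banach_closed_point (convex_convexHull ℝ _)
    (hS.sdiff.isCompact_convexHull (𝕜 := ℝ)).isClosed hx'
  exact ⟨f, fun z hz hzx => (hfc z (subset_convexHull ℝ _ ⟨hz, hzx⟩)).trans hcx⟩

theorem exists_isExposedSimplices {E ι κ : Type*} [NormedAddCommGroup E] [NormedSpace ℝ E]
    [FiniteDimensional ℝ E] [Finite ι] [Fintype κ] [Nonempty κ] (f : ι → E →ₗ[ℝ] ℝ)
    {y : ι → E} (hf : ∀ l l', l' ≠ l → f l (y l') < f l (y l))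
    (hκ : Fintype.card κ ≤ finrank ℝ E) : ∃ w : ι → κ → E, IsExposedSimplices f y w := by
  have hnhds (l : ι) : {z | ∀ l', l' ≠ l → f l' z < f l' (y l')} ∈ 𝓝 (y l) :=
    eventually_all.2 fun l' => eventually_imp_distrib_left.2 fun hl' =>
      (f l').continuous_of_finiteDimensional.continuousAt.eventually_lt continuousAt_const
        (hf l' l hl'.symm)
  choose w hw hcent hmem using fun l =>
    exists_affineIndependent_centroid_eq_forall_mem_apply_eq (f l) (hnhds l) hκ
  exact ⟨w, hw, hcent, fun l k => (hmem l k).2, fun l l' k hl => (hmem l' k).1 l hl.symm⟩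

theorem colorful_caratheodory_nd_optimal_general (d n : ℕ) (hd : 1 ≤ d) (hn : 1 ≤ n)
    (y : Fin n → (Fin d → ℝ)) (hy : Function.Injective y)
    (hvert : (convexHull ℝ (Set.range y)).extremePoints ℝ = Set.range y) :
    ∃ X : Fin (n * d - 1) → Set (Fin d → ℝ),
      (∀ i, convexHull ℝ (Set.range y) ⊆ convexHull ℝ (X i)) ∧
      ∀ x : Fin (n * d - 1) → (Fin d → ℝ), (∀ i, x i ∈ X i) →
        ¬ convexHull ℝ (Set.range y) ⊆ convexHull ℝ (Set.range x) := by
  have hexposed (l : Fin n) :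
      ∃ f : StrongDual ℝ (Fin d → ℝ), ∀ l', l' ≠ l → f (y l') < f (y l) := by
    obtain ⟨f, hf⟩ := exists_forall_lt_of_mem_extremePoints_convexHull (finite_range y)
      (hvert ▸ mem_range_self l)
    exact ⟨f, fun l' hl' => hf _ (mem_range_self l') (hy.ne hl')⟩
  choose f hf using hexposed
  have : Nonempty (Fin d) := ⟨⟨0, hd⟩⟩
  obtain ⟨w, hw⟩ := exists_isExposedSimplices (fun l => (f l : (Fin d → ℝ) →ₗ[ℝ] ℝ)) hf
    (κ := Fin d) (by simp)
  refine ⟨fun _ => range (uncurry w),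
    fun _ => convexHull_min hw.range_subset_convexHull (convex_convexHull ℝ _), fun x hx hK => ?_⟩
  have hcard := Fintype.card_le_of_injective_of_range_subset hw.injective_uncurry
    (hw.range_uncurry_subset (range_subset_iff.2 hx) ((subset_convexHull ℝ _).trans hK))
  simp only [Fintype.card_prod, Fintype.card_fin] at hcard
  have : 1 ≤ n * d := Nat.one_le_iff_ne_zero.2 (by positivity)
  omega

/-- Optimality of `nd` in the colorful quantitative Carathéodory lemma:
for a full-dimensional polytope `K` with `n` distinct vertices in general position,
there are `nd - 1` sets whose convex hulls all contain `K` but such that no colorful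
choice has `K` inside its convex hull. -/
theorem colorful_caratheodory_nd_optimal (d n : ℕ) (hd : 1 ≤ d) (hn : 1 ≤ n)
    (y : Fin n → (Fin d → ℝ)) (hy : Function.Injective y)
    (hvert : (convexHull ℝ (Set.range y)).extremePoints ℝ = Set.range y)
    (hfull : affineSpan ℝ (Set.range y) = ⊤) :
    ∃ X : Fin (n * d - 1) → Set (Fin d → ℝ),
      (∀ i, convexHull ℝ (Set.range y) ⊆ convexHull ℝ (X i)) ∧
      ∀ x : Fin (n * d - 1) → (Fin d → ℝ), (∀ i, x i ∈ X i) →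
        ¬ convexHull ℝ (Set.range y) ⊆ convexHull ℝ (Set.range x) :=
  colorful_caratheodory_nd_optimal_general d n hd hn y hy hvert
end

section
/- Lower bound relating Hoffman and Helly numbers: Let S ⊆ R^d be discrete. If a finite set U ⊆ S is k-Hoffman, i.e., |⋂_{u∈U} conv(U∖{u}) ∩ S| < k, then the quantitative Helly number H_S(k) satisfies H_S(k) > |U| − k. Consequently H_S(k) ≥ H'_S(k) − k + 1, where H'_S(k) is the largest cardinality of a k-Hoffman subset of S. -/
/-- `S` is a discrete subset of `ℝ^d`: every point has a neighborhood meeting `S` in a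
finite set. -/
def DiscreteIn {d : ℕ} (S : Set (Fin d → ℝ)) : Prop :=
  ∀ x : Fin d → ℝ, ∃ ε > 0, (S ∩ Metric.ball x ε).Finite

/-- `X` contains at least `k` points. -/
def AtLeast {d : ℕ} (k : ℕ) (X : Set (Fin d → ℝ)) : Prop :=
  ∃ T : Finset (Fin d → ℝ), ↑T ⊆ X ∧ k ≤ T.card

/-- `N` is a quantitative Helly number for `S` and `k`: for every finite family of convex
sets, if every subfamily of at most `N` members has at least `k` points of `S` in its
intersection, then so does the whole family. -/
def HellyProp {d : ℕ} (S : Set (Fin d → ℝ)) (k N : ℕ) : Prop :=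
  ∀ (t : ℕ) (F : Fin t → Set (Fin d → ℝ)), (∀ i, Convex ℝ (F i)) →
    (∀ G : Finset (Fin t), G.card ≤ N → AtLeast k (S ∩ ⋂ i ∈ G, F i)) →
    AtLeast k (S ∩ ⋂ i, F i)

/-- `P` is `k`-Hoffman with respect to `S`: `|⋂_{p∈P} conv(P∖{p}) ∩ S| < k`. -/
def IsKHoffman {d : ℕ} (S : Set (Fin d → ℝ)) (k : ℕ) (P : Finset (Fin d → ℝ)) : Prop :=
  ¬ AtLeast k ((⋂ p ∈ (P : Set (Fin d → ℝ)),
      convexHull ℝ ((P : Set (Fin d → ℝ)) \ {p})) ∩ S)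

/-- `P` is `k`-hollow with respect to `S`: `|(conv(P) ∖ V(conv(P))) ∩ S| < k`. -/
def IsKHollow {d : ℕ} (S : Set (Fin d → ℝ)) (k : ℕ) (P : Finset (Fin d → ℝ)) : Prop :=
  ¬ AtLeast k ((convexHull ℝ (P : Set (Fin d → ℝ)) \
      (convexHull ℝ (P : Set (Fin d → ℝ))).extremePoints ℝ) ∩ S)


/-- if a finite `U ⊆ S` is `k`-Hoffman, then any quantitative Helly number `N`
for `S, k` satisfies `N > |U| - k`, i.e. `|U| < N + k`. -/
theorem helly_gt_hoffman_sub_k (d k : ℕ) (S : Set (Fin d → ℝ)) (hS : DiscreteIn S)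
    (U : Finset (Fin d → ℝ)) (hU : ↑U ⊆ S) (hHoff : IsKHoffman S k U)
    (N : ℕ) (hN : HellyProp S k N) : U.card < N + k := by
  by_contra hcard
  push_neg at hcard
  apply hHoff
  classical
  set t := U.card with ht
  let e := U.equivFin
  set F : Fin t → Set (Fin d → ℝ) :=
    fun i => convexHull ℝ ((U : Set (Fin d → ℝ)) \ {(e.symm i : Fin d → ℝ)}) with hF
  have hconv : ∀ i, Convex ℝ (F i) := fun i => convex_convexHull ℝ _
  have hsub : ∀ G : Finset (Fin t), G.card ≤ N → AtLeast k (S ∩ ⋂ i ∈ G, F i) := by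
    intro G hG
    refine ⟨U \ G.image (fun i => (e.symm i : Fin d → ℝ)), ?_, ?_⟩
    · intro x hx
      rw [Finset.coe_sdiff] at hx
      obtain ⟨hxU, hximg⟩ := hx
      refine ⟨hU hxU, ?_⟩
      simp only [Set.mem_iInter]
      intro i hi
      apply subset_convexHull
      refine ⟨hxU, ?_⟩
      intro hx'
      apply hximg
      simp only [Set.mem_singleton_iff] at hx'
      exact Finset.mem_coe.mpr (Finset.mem_image.mpr ⟨i, hi, hx'.symm⟩)
    · have himg : (G.image fun i => (e.symm i : Fin d → ℝ)) ⊆ U := by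
        intro x hx
        obtain ⟨i, _, rfl⟩ := Finset.mem_image.mp hx
        exact (e.symm i).2
      have hc : (G.image fun i => (e.symm i : Fin d → ℝ)).card ≤ N :=
        le_trans Finset.card_image_le hG
      rw [Finset.card_sdiff_of_subset himg]
      omega
  obtain ⟨T, hT, hTk⟩ := hN t F hconv hsub
  refine ⟨T, ?_, hTk⟩
  intro x hx
  obtain ⟨hxS, hxI⟩ := hT hx
  refine ⟨?_, hxS⟩
  simp only [Set.mem_iInter]
  intro p hp
  have hx' : x ∈ F (e ⟨p, hp⟩) := by
    simp only [Set.mem_iInter] at hxI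
    exact hxI (e ⟨p, hp⟩)
  simpa [hF, Equiv.symm_apply_apply] using hx'
end

section
/- Upper bound relating Hoffman and Helly numbers: Let S ⊆ R^d be discrete with finite quantitative Helly number H_S(k). Then H_S(k) ≤ H'_S(k), the quantitative Hoffman number, i.e., there exists a k-Hoffman subset of S of cardinality H_S(k). -/
/-- if `N` is the (least) quantitative Helly number of `S` for `k`, then there is
a `k`-Hoffman subset of `S` of cardinality `N`; hence `H_S(k) ≤ H'_S(k)`. -/
theorem helly_le_hoffman (d k : ℕ) (hk : 1 ≤ k) (S : Set (Fin d → ℝ)) (hS : DiscreteIn S)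
    (N : ℕ) (hN : IsLeast {M | HellyProp S k M} N) :
    ∃ P : Finset (Fin d → ℝ), ↑P ⊆ S ∧ P.card = N ∧ IsKHoffman S k P := by
  classical
  rcases Nat.eq_zero_or_pos N with h0 | hpos
  · subst h0
    refine ⟨∅, by simp, by simp, ?_⟩
    intro hA
    have hS' : AtLeast k S := by
      obtain ⟨T, hT, hc⟩ := hA
      exact ⟨T, fun x hx => by simpa using (hT hx), hc⟩
    have hfull := hN.1 1 (fun _ => (∅ : Set (Fin d → ℝ))) (fun _ => convex_empty)
      (by
        intro G hG
        have hGe : G = ∅ := Finset.card_eq_zero.mp (Nat.le_zero.mp hG)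
        subst hGe
        simpa using hS')
    obtain ⟨T, hT, hc⟩ := hfull
    have hTe : T = ∅ := by
      apply Finset.eq_empty_of_forall_notMem
      intro x hx
      have := hT hx
      simp [Set.mem_iInter] at this
    subst hTe
    simp at hc
    omega
  · -- N ≥ 1
    have hnot : ¬ HellyProp S k (N - 1) := by
      intro h
      have := hN.2 h
      omega
    rw [HellyProp] at hnot
    push_neg at hnot
    obtain ⟨t, F, hconv, hsmall, hfail⟩ := hnot
    have hGex : ∃ G : Finset (Fin t), G.card ≤ N ∧ ¬ AtLeast k (S ∩ ⋂ i ∈ G, F i) := by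
      by_contra h
      push_neg at h
      exact hfail (hN.1 t F hconv h)
    obtain ⟨G, hGcard, hGfail⟩ := hGex
    have hGN : G.card = N := by
      by_contra hne
      have : G.card ≤ N - 1 := by omega
      exact hGfail (hsmall G this)
    -- choose points
    have hex : ∀ j ∈ G, ∃ x, x ∈ S ∧ (∀ i ∈ G.erase j, x ∈ F i) ∧ x ∉ F j := by
      intro j hj
      have herase : (G.erase j).card ≤ N - 1 := by
        rw [Finset.card_erase_of_mem hj]; omega
      obtain ⟨T, hT, hc⟩ := hsmall (G.erase j) herase
      by_contra hcon
      push_neg at hcon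
      apply hGfail
      refine ⟨T, ?_, hc⟩
      intro x hx
      have hx' := hT hx
      have hxS : x ∈ S := hx'.1
      have hxi : ∀ i ∈ G.erase j, x ∈ F i := by
        intro i hi
        exact Set.mem_iInter₂.mp hx'.2 i hi
      have hxF : x ∈ F j := hcon x hxS hxi
      refine ⟨hxS, Set.mem_iInter₂.mpr ?_⟩
      intro i hi
      rcases eq_or_ne i j with rfl | hij
      · exact hxF
      · exact hxi i (Finset.mem_erase.mpr ⟨hij, hi⟩)
    choose! p hpS hpmem hpnot using hex
    set P : Finset (Fin d → ℝ) := G.image p with hP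
    have hinj : Set.InjOn p ↑G := by
      intro j hj j' hj' heq
      by_contra hne
      have : p j ∈ F j' := hpmem j hj j' (Finset.mem_erase.mpr ⟨Ne.symm hne, hj'⟩)
      rw [heq] at this
      exact hpnot j' hj' this
    refine ⟨P, ?_, ?_, ?_⟩
    · intro x hx
      simp only [hP, Finset.coe_image, Set.mem_image, Finset.mem_coe] at hx
      obtain ⟨j, hj, rfl⟩ := hx
      exact hpS j hj
    · rw [hP, Finset.card_image_of_injOn hinj, hGN]
    · intro hA
      obtain ⟨T, hT, hc⟩ := hA
      apply hGfail
      refine ⟨T, ?_, hc⟩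
      intro x hx
      have hx' := hT hx
      have hxS : x ∈ S := hx'.2
      have hxH : ∀ q ∈ (P : Set (Fin d → ℝ)), x ∈ convexHull ℝ ((P : Set (Fin d → ℝ)) \ {q}) :=
        Set.mem_iInter₂.mp hx'.1
      refine ⟨hxS, Set.mem_iInter₂.mpr ?_⟩
      intro i hi
      have hpiP : p i ∈ (P : Set (Fin d → ℝ)) := by
        simp only [hP, Finset.coe_image, Set.mem_image, Finset.mem_coe]
        exact ⟨i, hi, rfl⟩
      have hsub : (P : Set (Fin d → ℝ)) \ {p i} ⊆ F i := by
        rintro y ⟨hyP, hyne⟩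
        simp only [hP, Finset.coe_image, Set.mem_image, Finset.mem_coe] at hyP
        obtain ⟨j, hj, rfl⟩ := hyP
        have hji : j ≠ i := by
          intro h; subst h; exact hyne rfl
        exact hpmem j hj i (Finset.mem_erase.mpr ⟨Ne.symm hji, hi⟩)
      have := hxH (p i) hpiP
      exact convexHull_min hsub (hconv i) this
end

section
/- Hoffman number equals maximum hollow set size: Let S ⊆ R^d be discrete. Then the quantitative Hoffman number H'_S(k) (the largest cardinality of a k-Hoffman subset of S) equals the largest cardinality of a k-hollow subset of S. -/
/-!
An extreme point `p` of `conv P` never lies in `conv (P ∖ {p})`, so a nonempty `k`-hollow set is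
`k`-Hoffman. Conversely, if `P` is `k`-Hoffman but not `k`-hollow, some non-extreme point `y ∈ S`
of `conv P` lies outside `⋂_{p ∈ P} conv (P ∖ {p})`. Take such a `y` for which the number of
`p ∈ P` with `y ∉ conv (P ∖ {p})` is least, and exchange one such `p` for `y`. The exchange lemma
`u ∈ conv (B ∪ {y}), y ∈ conv (B ∪ {u}) → u = y ∨ u ∈ conv B` shows that the new set is again
`k`-Hoffman (by the minimality of `y`) and that its hull no longer contains `p`. Since `S` is
discrete, `S ∩ conv P` is finite and strictly shrinks, so iterating ends with a `k`-hollow set of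
the same size.
-/

open Set

section ConvexHull

variable {E : Type*} [AddCommGroup E] [Module ℝ E]

theorem eq_or_mem_convexHull_of_mem_convexHull_insert {B : Set E} {u y : E}
    (hu : u ∈ convexHull ℝ (insert y B)) (hy : y ∈ convexHull ℝ (insert u B)) :
    u = y ∨ u ∈ convexHull ℝ B := by
  rcases B.eq_empty_or_nonempty with rfl | hB
  · simpa [convexHull_singleton] using hu
  rw [convexHull_insert hB, mem_convexJoin] at hu hy
  obtain ⟨y', hy', z₁, hz₁, a, b, ha, hb, hab, hu⟩ := hu
  obtain ⟨u', hu', z₂, hz₂, c, e, hc, he, hce, hy⟩ := hy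
  rw [mem_singleton_iff.1 hy'] at hu
  rw [mem_singleton_iff.1 hu'] at hy
  by_cases hac : a * c = 1
  · have ha1 : a = 1 := by nlinarith
    left
    rw [← hu, ha1, show b = 0 by linarith, one_smul, zero_smul, add_zero]
  right
  have hpos : 0 < 1 - a * c := by
    have : a * c ≤ 1 := by nlinarith
    exact lt_of_le_of_ne (by linarith) (fun h => hac (by linarith))
  have hlin : (1 - a * c) • u = (a * e) • z₂ + b • z₁ := by
    linear_combination (norm := module) -hu - a • hy
  have hsum : (a * e) / (1 - a * c) + b / (1 - a * c) = 1 := by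
    field_simp; nlinarith
  convert (convex_convexHull ℝ B) hz₂ hz₁ (div_nonneg (by positivity) hpos.le)
    (div_nonneg hb hpos.le) hsum using 1
  apply smul_right_injective E hpos.ne'
  simp only [smul_add, smul_smul, mul_div_cancel₀ _ hpos.ne', hlin]

theorem convexHull_insert_subset_of_mem {B : Set E} {y : E} (hy : y ∈ convexHull ℝ B) :
    convexHull ℝ (insert y B) ⊆ convexHull ℝ B :=
  convexHull_min (insert_subset hy (subset_convexHull ℝ B)) (convex_convexHull ℝ B)

theorem notMem_convexHull_sdiff_of_mem_extremePoints {X : Set E} {p : E}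
    (hp : p ∈ (convexHull ℝ X).extremePoints ℝ) : p ∉ convexHull ℝ (X \ {p}) := fun h =>
  ((convex_convexHull ℝ X).mem_extremePoints_iff_mem_sdiff_convexHull_sdiff.1 hp).2
    (convexHull_mono (sdiff_subset_sdiff_left (subset_convexHull ℝ X)) h)

def hoffmanCore (X : Set E) : Set E :=
  ⋂ p ∈ X, convexHull ℝ (X \ {p})

theorem hoffmanCore_subset_sdiff_extremePoints {X : Set E} (hX : X.Nonempty) :
    hoffmanCore X ⊆ convexHull ℝ X \ (convexHull ℝ X).extremePoints ℝ := by
  intro u hu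
  rw [hoffmanCore, mem_iInter₂] at hu
  obtain ⟨p, hp⟩ := hX
  refine ⟨convexHull_mono sdiff_subset (hu p hp), fun hext => ?_⟩
  exact notMem_convexHull_sdiff_of_mem_extremePoints hext
    (hu u (extremePoints_convexHull_subset hext))

section Exchange

variable {X : Set E} {x y u : E}

theorem mem_convexHull_sdiff_of_mem_hoffmanCore_insert_sdiff (hyX : y ∉ X)
    (hu : u ∈ hoffmanCore (insert y (X \ {x}))) : u ∈ convexHull ℝ (X \ {x}) := by
  have h := mem_iInter₂.1 hu y (mem_insert y _)
  rwa [insert_sdiff_self_of_notMem (fun h => hyX h.1)] at h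

theorem mem_convexHull_insert_of_mem_hoffmanCore_insert_sdiff {r : E} (hr : r ∈ X) (hrx : r ≠ x)
    (hu : u ∈ hoffmanCore (insert y (X \ {x}))) : u ∈ convexHull ℝ (insert y (X \ {r})) := by
  refine convexHull_mono ?_ (mem_iInter₂.1 hu r (mem_insert_of_mem y ⟨hr, hrx⟩))
  rintro w ⟨rfl | ⟨hwX, -⟩, hwr⟩
  · exact mem_insert _ _
  · exact mem_insert_of_mem _ ⟨hwX, hwr⟩

theorem mem_hoffmanCore_of_mem_hoffmanCore_insert_sdiff (huX : u ∈ X) (hyX : y ∉ X)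
    (hy : y ∈ convexHull ℝ X) (hu : u ∈ hoffmanCore (insert y (X \ {x}))) :
    u ∈ hoffmanCore X := by
  refine mem_iInter₂.2 fun p hp => ?_
  rcases eq_or_ne p u with rfl | hpu
  · rcases eq_or_ne p x with rfl | hpx
    · exact mem_convexHull_sdiff_of_mem_hoffmanCore_insert_sdiff hyX hu
    have hy' : y ∈ convexHull ℝ (insert p (X \ {p})) := by
      rwa [insert_sdiff_singleton, insert_eq_of_mem hp]
    exact (eq_or_mem_convexHull_of_mem_convexHull_insert
      (mem_convexHull_insert_of_mem_hoffmanCore_insert_sdiff hp hpx hu) hy').resolve_left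
      (fun h => hyX (h ▸ hp))
  · exact subset_convexHull ℝ _ ⟨huX, hpu.symm⟩

theorem notMem_convexHull_insert_sdiff (hx : x ∈ X) (hyX : y ∉ X) (hy : y ∈ convexHull ℝ X)
    (hyx : y ∉ convexHull ℝ (X \ {x})) : x ∉ convexHull ℝ (insert y (X \ {x})) := by
  intro hx'
  have hy' : y ∈ convexHull ℝ (insert x (X \ {x})) := by
    rwa [insert_sdiff_singleton, insert_eq_of_mem hx]
  rcases eq_or_mem_convexHull_of_mem_convexHull_insert hx' hy' with rfl | hxX
  · exact hyX hx
  · exact hyx (convexHull_insert_subset_of_mem hxX hy')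

end Exchange

/-- Vanishes exactly on `hoffmanCore X`. -/
noncomputable def hullDefect (X : Finset E) (v : E) : ℕ :=
  open Classical in (X.filter fun r => v ∉ convexHull ℝ ((X : Set E) \ {r})).card

theorem hullDefect_lt_of_mem_hoffmanCore_insert_sdiff {X : Finset E} {x y u : E} (hx : x ∈ X)
    (hyX : y ∉ X) (hyx : y ∉ convexHull ℝ ((X : Set E) \ {x}))
    (hu : u ∈ hoffmanCore (insert y ((X : Set E) \ {x}))) : hullDefect X u < hullDefect X y := by
  classical
  have hux := mem_convexHull_sdiff_of_mem_hoffmanCore_insert_sdiff (Finset.mem_coe.not.2 hyX) hu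
  unfold hullDefect
  refine Finset.card_lt_card ((Finset.ssubset_iff_of_subset fun r hr => ?_).2
    ⟨x, Finset.mem_filter.2 ⟨hx, hyx⟩, fun h => (Finset.mem_filter.1 h).2 hux⟩)
  obtain ⟨hr, hur⟩ := Finset.mem_filter.1 hr
  have hrx : r ≠ x := by rintro rfl; exact hur hux
  refine Finset.mem_filter.2 ⟨hr, fun hyr => hur ?_⟩
  exact convexHull_insert_subset_of_mem hyr
    (mem_convexHull_insert_of_mem_hoffmanCore_insert_sdiff hr hrx hu)

end ConvexHull

theorem mem_hoffmanCore_of_notMem_extremePoints {E : Type*} [NormedAddCommGroup E]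
    [NormedSpace ℝ E] {X : Set E} {p : E} (hX : X.Finite) (hpX : p ∈ X)
    (hp : p ∉ (convexHull ℝ X).extremePoints ℝ) : p ∈ hoffmanCore X := by
  have hext : convexHull ℝ ((convexHull ℝ X).extremePoints ℝ) = convexHull ℝ X := by
    have h := closure_convexHull_extremePoints (hX.isCompact_convexHull ℝ) (convex_convexHull ℝ X)
    rwa [((hX.subset extremePoints_convexHull_subset).isClosed_convexHull ℝ).closure_eq] at h
  refine mem_iInter₂.2 fun q _ => ?_
  rcases eq_or_ne q p with rfl | hqp
  · have hsub : (convexHull ℝ X).extremePoints ℝ ⊆ X \ {q} := fun z hz =>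
      ⟨extremePoints_convexHull_subset hz, by rintro rfl; exact hp hz⟩
    exact convexHull_mono hsub (hext.ge (subset_convexHull ℝ X hpX))
  · exact subset_convexHull ℝ _ ⟨hpX, hqp.symm⟩

variable {d : ℕ}

theorem AtLeast.mono {k : ℕ} {X Y : Set (Fin d → ℝ)} (hXY : X ⊆ Y) (hX : AtLeast k X) :
    AtLeast k Y :=
  let ⟨T, hT, hk⟩ := hX
  ⟨T, hT.trans hXY, hk⟩

theorem AtLeast.nonempty {k : ℕ} {X : Set (Fin d → ℝ)} (hX : AtLeast k X) (hk : k ≠ 0) :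
    X.Nonempty :=
  let ⟨T, hT, hkT⟩ := hX
  (Finset.card_pos.1 (by omega)).to_set.mono hT

theorem DiscreteIn.finite_inter_convexHull {S : Set (Fin d → ℝ)} (hS : DiscreteIn S)
    (X : Finset (Fin d → ℝ)) : (S ∩ convexHull ℝ (X : Set (Fin d → ℝ))).Finite := by
  choose ε hε hfin using hS
  obtain ⟨t, -, ht⟩ := (X.finite_toSet.isCompact_convexHull ℝ).elim_nhds_subcover
    (fun x => Metric.ball x (ε x)) (fun x _ => Metric.ball_mem_nhds x (hε x))
  refine (t.finite_toSet.biUnion fun x _ => hfin x).subset fun z ⟨hzS, hz⟩ => ?_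
  obtain ⟨x, hx, hzx⟩ := mem_iUnion₂.1 (ht hz)
  exact mem_iUnion₂.2 ⟨x, hx, hzS, hzx⟩

variable {S : Set (Fin d → ℝ)} {k : ℕ}

theorem IsKHollow.ne_zero {P : Finset (Fin d → ℝ)} (hP : IsKHollow S k P) : k ≠ 0 := by
  rintro rfl
  exact hP ⟨∅, by simp, le_rfl⟩

theorem isKHollow_singleton (hk : k ≠ 0) (s : Fin d → ℝ) : IsKHollow S k {s} := by
  intro h
  obtain ⟨z, hz⟩ := h.nonempty hk
  simp [convexHull_singleton, extremePoints_singleton] at hz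

theorem isKHoffman_empty_iff : IsKHoffman S k ∅ ↔ ¬AtLeast k S := by
  simp [IsKHoffman]

theorem IsKHollow.isKHoffman {P : Finset (Fin d → ℝ)} (hP : P.Nonempty) (h : IsKHollow S k P) :
    IsKHoffman S k P := fun hH =>
  h (hH.mono (inter_subset_inter_left S (hoffmanCore_subset_sdiff_extremePoints hP.to_set)))

theorem IsKHoffman.exists_exchange {X : Finset (Fin d → ℝ)} (hXS : ↑X ⊆ S)
    (hX : IsKHoffman S k X) (hX' : ¬IsKHollow S k X) :
    ∃ Q : Finset (Fin d → ℝ), ↑Q ⊆ S ∧ IsKHoffman S k Q ∧ Q.card = X.card ∧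
      convexHull ℝ (Q : Set (Fin d → ℝ)) ⊆ convexHull ℝ (X : Set (Fin d → ℝ)) ∧
      ∃ x ∈ X, x ∉ convexHull ℝ (Q : Set (Fin d → ℝ)) := by
  classical
  set C := {v | v ∈ S ∧ v ∈ convexHull ℝ (X : Set (Fin d → ℝ)) \
    (convexHull ℝ (X : Set (Fin d → ℝ))).extremePoints ℝ ∧ v ∉ hoffmanCore (X : Set (Fin d → ℝ))}
  have hC : C.Nonempty := by
    by_contra hC
    refine hX ((not_not.1 hX').mono ?_)
    rintro v ⟨hv, hvS⟩
    refine ⟨?_, hvS⟩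
    by_contra hvH
    exact hC ⟨v, hvS, hv, hvH⟩
  obtain ⟨y, ⟨hyS, ⟨hyconv, hyext⟩, hyH⟩, hymin⟩ :
      ∃ y ∈ C, ∀ v ∈ C, hullDefect X y ≤ hullDefect X v :=
    ⟨_, Function.argminOn_mem _ C hC, fun v hv => Function.argminOn_le _ C hv⟩
  have hyX : y ∉ X := fun h =>
    hyH (mem_hoffmanCore_of_notMem_extremePoints X.finite_toSet h hyext)
  obtain ⟨x, hx, hyx⟩ : ∃ x ∈ X, y ∉ convexHull ℝ ((X : Set (Fin d → ℝ)) \ {x}) := by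
    simpa [hoffmanCore] using hyH
  have hQ : ((insert y (X.erase x) : Finset (Fin d → ℝ)) : Set (Fin d → ℝ)) =
      insert y ((X : Set (Fin d → ℝ)) \ {x}) := by
    push_cast; rfl
  refine ⟨insert y (X.erase x), ?_, ?_, ?_, ?_, x, hx, ?_⟩
  · rw [hQ]
    exact insert_subset hyS (sdiff_subset.trans hXS)
  · refine fun hQH => hX (hQH.mono ?_)
    rintro u ⟨hu, huS⟩
    refine ⟨?_, huS⟩
    rw [hQ] at hu
    -- otherwise `u` would be a candidate of smaller defect than `y`
    by_contra huH
    have huX : u ∉ X := fun huX =>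
      huH (mem_hoffmanCore_of_mem_hoffmanCore_insert_sdiff huX hyX hyconv hu)
    have huC : u ∈ C :=
      ⟨huS, ⟨convexHull_mono sdiff_subset
        (mem_convexHull_sdiff_of_mem_hoffmanCore_insert_sdiff hyX hu),
        fun he => huX (extremePoints_convexHull_subset he)⟩, huH⟩
    exact (hymin u huC).not_gt (hullDefect_lt_of_mem_hoffmanCore_insert_sdiff hx hyX hyx hu)
  · rw [Finset.card_insert_of_notMem (fun h => hyX (Finset.mem_of_mem_erase h)),
      Finset.card_erase_add_one hx]
  · rw [hQ]
    exact (convexHull_mono (insert_subset_insert sdiff_subset)).trans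
      (convexHull_insert_subset_of_mem hyconv)
  · rw [hQ]
    exact notMem_convexHull_insert_sdiff hx hyX hyconv hyx

theorem IsKHoffman.exists_isKHollow (hS : DiscreteIn S) {X : Finset (Fin d → ℝ)} (hXS : ↑X ⊆ S)
    (hX : IsKHoffman S k X) :
    ∃ Q : Finset (Fin d → ℝ), ↑Q ⊆ S ∧ IsKHollow S k Q ∧ Q.card = X.card := by
  induction hn : (S ∩ convexHull ℝ (X : Set (Fin d → ℝ))).ncard using Nat.strong_induction_on
    generalizing X with
  | _ n ih =>
    by_cases hX' : IsKHollow S k X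
    · exact ⟨X, hXS, hX', rfl⟩
    obtain ⟨Q, hQS, hQ, hQX, hconv, x, hx, hxQ⟩ := hX.exists_exchange hXS hX'
    have hlt : (S ∩ convexHull ℝ (Q : Set (Fin d → ℝ))).ncard < n := hn ▸
      ncard_lt_ncard ((ssubset_iff_of_subset (inter_subset_inter_right S hconv)).2
        ⟨x, ⟨hXS hx, subset_convexHull ℝ _ hx⟩, fun h => hxQ h.2⟩)
        (hS.finite_inter_convexHull X)
    obtain ⟨R, hRS, hR, hRQ⟩ := ih _ hlt hQS hQ rfl
    exact ⟨R, hRS, hR, hRQ.trans hQX⟩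

theorem isGreatest_iff_of_subset_of_subset_insert_zero {A B : Set ℕ} {N : ℕ} (hAB : A ⊆ B)
    (hBA : B ⊆ insert 0 A) (h0 : IsGreatest B 0 → 0 ∈ A) : IsGreatest A N ↔ IsGreatest B N := by
  refine ⟨fun ⟨hN, hub⟩ => ⟨hAB hN, fun b hb => ?_⟩,
    fun ⟨hN, hub⟩ => ⟨?_, fun a ha => hub (hAB ha)⟩⟩
  · rcases hBA hb with rfl | hb
    exacts [Nat.zero_le N, hub hb]
  · rcases hBA hN with rfl | hN'
    exacts [h0 ⟨hN, hub⟩, hN']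

/-- the quantitative Hoffman number (largest cardinality of a `k`-Hoffman subset
of `S`) equals the largest cardinality of a `k`-hollow subset of `S`. -/
theorem hoffman_eq_hollow (d k : ℕ) (S : Set (Fin d → ℝ)) (hS : DiscreteIn S) (N : ℕ) :
    IsGreatest {n | ∃ P : Finset (Fin d → ℝ), ↑P ⊆ S ∧ IsKHoffman S k P ∧ P.card = n} N ↔
    IsGreatest {n | ∃ P : Finset (Fin d → ℝ), ↑P ⊆ S ∧ IsKHollow S k P ∧ P.card = n} N := by
  refine isGreatest_iff_of_subset_of_subset_insert_zero ?_ ?_ ?_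
  · rintro _ ⟨P, hPS, hP, rfl⟩
    exact hP.exists_isKHollow hS hPS
  · rintro _ ⟨P, hPS, hP, rfl⟩
    rcases P.eq_empty_or_nonempty with rfl | hne
    exacts [Or.inl rfl, Or.inr ⟨P, hPS, hP.isKHoffman hne, rfl⟩]
  · rintro ⟨⟨P, -, hP, -⟩, hub⟩
    refine ⟨∅, by simp, isKHoffman_empty_iff.2 fun hSk => ?_, rfl⟩
    obtain ⟨s, hs⟩ := hSk.nonempty hP.ne_zero
    exact one_ne_zero (Nat.le_zero.1
      (hub ⟨{s}, by simpa using hs, isKHollow_singleton hP.ne_zero s, rfl⟩))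
end

section
/- Depth of the common points in the Tverberg proof: Let S ⊆ R^d be discrete with finite quantitative Helly number N = H_S(k). Let A ⊆ S with |A| = N·(m−1)·k·d + k, and suppose P ⊆ S is a set of k points contained in conv(B) for every B ⊆ A with |B| = (N−1)(m−1)kd + k. Then P has depth at least (m−1)kd + 1 with respect to A, i.e., every closed halfspace containing a point of P contains at least (m−1)kd + 1 points of A. -/
/-- depth of the common points in the Tverberg proof: if `|A| = N(m-1)kd + k`
and `P` is a set of `k` points of `S` contained in `conv B` for every `B ⊆ A` of size
`(N-1)(m-1)kd + k`, then every closed halfspace containing a point of `P` contains at least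
`(m-1)kd + 1` points of `A`. -/
theorem tverberg_depth_claim (d m k N : ℕ) (hm : 1 ≤ m) (hk : 1 ≤ k) (hN1 : 1 ≤ N)
    (S : Set (Fin d → ℝ)) (hS : DiscreteIn S) (hN : HellyProp S k N)
    (A P : Finset (Fin d → ℝ)) (hA : ↑A ⊆ S) (hPS : ↑P ⊆ S)
    (hAcard : A.card = N * (m - 1) * k * d + k) (hPcard : P.card = k)
    (hP : ∀ B ⊆ A, B.card = (N - 1) * (m - 1) * k * d + k →
      ↑P ⊆ convexHull ℝ (B : Set (Fin d → ℝ))) :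
    ∀ (v : Fin d → ℝ) (c : ℝ), v ≠ 0 → ∀ p ∈ P, (∑ i, v i * p i ≤ c) →
      (m - 1) * k * d + 1 ≤
        ((A : Set (Fin d → ℝ)) ∩ {x : Fin d → ℝ | ∑ i, v i * x i ≤ c}).ncard := by
  intro v c hv p hp hpc
  by_contra hlt
  push_neg at hlt
  have hncard : ((A : Set (Fin d → ℝ)) ∩ {x : Fin d → ℝ | ∑ i, v i * x i ≤ c}).ncard
      = (A.filter (fun x => ∑ i, v i * x i ≤ c)).card := by
    rw [← Set.ncard_coe_finset]
    congr 1
    ext x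
    simp [Set.mem_inter_iff]
  rw [hncard, Nat.lt_add_one_iff] at hlt
  have hsplit := Finset.card_filter_add_card_filter_not
      (s := A) (p := fun x => ∑ i, v i * x i ≤ c)
  have hcard2 : (N - 1) * (m - 1) * k * d + k ≤ (A.filter (fun x => ¬ ∑ i, v i * x i ≤ c)).card := by
    obtain ⟨N', rfl⟩ : ∃ N', N = N' + 1 := ⟨N - 1, (Nat.succ_pred_eq_of_pos hN1).symm⟩
    simp only [Nat.add_sub_cancel]
    have hmul : (N' + 1) * (m - 1) * k * d = N' * (m - 1) * k * d + (m - 1) * k * d := by ring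
    set a := (A.filter (fun x => ∑ i, v i * x i ≤ c)).card with ha
    set b := (A.filter (fun x => ¬ ∑ i, v i * x i ≤ c)).card with hb
    clear_value a b
    clear ha hb hncard
    omega
  obtain ⟨B, hBsub, hBcard⟩ := Finset.exists_subset_card_eq hcard2
  have hBA : B ⊆ A := hBsub.trans (Finset.filter_subset _ _)
  have hPB := hP B hBA hBcard
  have hconv : Convex ℝ {x : Fin d → ℝ | c < ∑ i, v i * x i} := by
    apply convex_halfSpace_gt (𝕜 := ℝ)
    constructor
    · intro x y; simp [mul_add, Finset.sum_add_distrib]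
    · intro r x; simp [Finset.mul_sum, mul_comm, mul_assoc, mul_left_comm]
  have hBin : (B : Set (Fin d → ℝ)) ⊆ {x | c < ∑ i, v i * x i} := by
    intro x hx
    have := hBsub hx
    simp only [Finset.mem_filter, not_le] at this
    exact this.2
  have : p ∈ {x : Fin d → ℝ | c < ∑ i, v i * x i} :=
    hconv.convexHull_subset_iff.mpr hBin (hPB hp)
  exact absurd hpc (not_le.mpr this)
end

section
/- Inductive step of the Tverberg partition construction (case k ≥ 2): Let A ⊆ R^d be finite and P a set of k points with depth at least (m−1)kd + 1 with respect to A. Then for every j ≤ m there exist pairwise disjoint subsets A_1, ..., A_j ⊆ A, each of cardinality at most kd, such that P ⊆ conv(A_i) for every i. -/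
/-!
The sets are chosen greedily. The sets chosen so far cover at most `(m - 1)kd` points, so after
removing them `P` still has depth at least one, i.e. lies in the convex hull of the remaining
points (a point of `P` outside that hull would be cut off by a halfspace missing all of them).
From these, at most `kd` points suffice to capture `P`: by an exchange argument each `p ∈ P` lies
in the hull of `d` points together with any prescribed extra point, and two distinct points of `P`
that serve as each other's extra point lie in the hull of the union of their two sets.
-/

open Finset Function

section Caratheodory

variable {𝕜 E : Type*} [Field 𝕜] [LinearOrder 𝕜] [IsStrictOrderedRing 𝕜]
  [AddCommGroup E] [Module 𝕜 E]

theorem exists_mem_convexHull_erase_of_affine_relation [DecidableEq E] {t : Finset E} {g : E → 𝕜}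
    (hgsum : ∑ e ∈ t, g e = 0) (hgcombo : ∑ e ∈ t, g e • e = 0) (hgpos : ∃ e ∈ t, 0 < g e)
    {x : E} (hx : x ∈ convexHull 𝕜 (t : Set E)) :
    ∃ z ∈ t, 0 < g z ∧ x ∈ convexHull 𝕜 (t.erase z : Set E) := by
  obtain ⟨w, hw0, hw1, hwx⟩ := Finset.mem_convexHull'.1 hx
  obtain ⟨z, hz, hmin⟩ := {e ∈ t | 0 < g e}.exists_min_image (fun e ↦ w e / g e) <| by
    obtain ⟨e, he, hge⟩ := hgpos
    exact ⟨e, mem_filter.2 ⟨he, hge⟩⟩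
  obtain ⟨hzt, hgz⟩ := mem_filter.1 hz
  -- move the weights along the relation until the weight of `z` vanishes
  let w' : E → 𝕜 := fun e ↦ w e - w z / g z * g e
  have hw'z : w' z = 0 := by simp [w', hgz.ne']
  refine ⟨z, hzt, hgz, Finset.mem_convexHull'.2 ⟨w', fun e he ↦ ?_, ?_, ?_⟩⟩
  · have he := mem_of_mem_erase he
    rcases le_or_gt (g e) 0 with hge | hge
    · have := mul_nonpos_of_nonneg_of_nonpos (div_nonneg (hw0 z hzt) hgz.le) hge
      linarith [hw0 e he]
    · exact sub_nonneg.2 ((le_div_iff₀ hge).1 (hmin e (mem_filter.2 ⟨he, hge⟩)))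
  · rw [sum_erase t hw'z]
    simp [w', sum_sub_distrib, ← mul_sum, hw1, hgsum]
  · rw [sum_erase t (by simp [hw'z])]
    simp only [w', sub_smul, mul_smul, sum_sub_distrib, ← smul_sum, hgcombo, smul_zero, sub_zero,
      hwx]

theorem exists_subset_card_le_finrank_mem_convexHull_insert [FiniteDimensional 𝕜 E]
    [DecidableEq E] (y : E) {x : E} (T : Finset E)
    (hx : x ∈ convexHull 𝕜 (insert y (T : Set E))) :
    ∃ S ⊆ T, #S ≤ Module.finrank 𝕜 E ∧ x ∈ convexHull 𝕜 (insert y (S : Set E)) := by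
  induction T using Finset.strongInduction with
  | H T ih =>
  by_cases hT : #T ≤ Module.finrank 𝕜 E
  · exact ⟨T, subset_rfl, hT, hx⟩
  by_cases hyT : y ∈ T
  · obtain ⟨S, hS, hcard, hxS⟩ := ih (T.erase y) (erase_ssubset hyT) <| by
      rwa [coe_erase, Set.insert_sdiff_singleton]
    exact ⟨S, hS.trans (erase_subset _ _), hcard, hxS⟩
  have hdep : ¬ AffineIndependent 𝕜 ((↑) : ↥(insert y T) → E) := fun hind ↦ by
    have := hind.card_le_finrank_succ.trans
      (Nat.add_le_add_right (Submodule.finrank_le _) 1)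
    rw [Fintype.card_coe, card_insert_of_notMem hyT] at this
    omega
  obtain ⟨g, hgcombo, hgsum, hgne⟩ := exists_nontrivial_relation_sum_zero_of_not_affine_ind hdep
  -- orient the relation so that `y` gets a nonpositive coefficient and is never the one removed
  obtain ⟨g, hgcombo, hgsum, hgne, hgy⟩ : ∃ g : E → 𝕜, ∑ e ∈ insert y T, g e • e = 0 ∧
      ∑ e ∈ insert y T, g e = 0 ∧ (∃ e ∈ insert y T, g e ≠ 0) ∧ g y ≤ 0 := by
    rcases le_total (g y) 0 with hgy | hgy
    · exact ⟨g, hgcombo, hgsum, hgne, hgy⟩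
    · refine ⟨-g, ?_, ?_, ?_, neg_nonpos.2 hgy⟩
      · simp [neg_smul, sum_neg_distrib, hgcombo]
      · simp [sum_neg_distrib, hgsum]
      · obtain ⟨e, he, hge⟩ := hgne
        exact ⟨e, he, neg_ne_zero.2 hge⟩
  obtain ⟨z, hz, hgz, hxz⟩ := exists_mem_convexHull_erase_of_affine_relation hgsum hgcombo
    (exists_pos_of_sum_zero_of_exists_nonzero g hgsum hgne) (by rwa [coe_insert])
  have hzy : z ≠ y := fun h ↦ (h ▸ hgz).not_ge hgy
  have hzT : z ∈ T := (mem_insert.1 hz).resolve_left hzy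
  obtain ⟨S, hS, hcard, hxS⟩ := ih (T.erase z) (erase_ssubset hzT) <| by
    rwa [erase_insert_of_ne hzy.symm, coe_insert] at hxz
  exact ⟨S, hS.trans (erase_subset _ _), hcard, hxS⟩

theorem exists_wbtw_of_mem_convexHull_insert {s : Set E} {x y : E} (hxy : x ≠ y)
    (hx : x ∈ convexHull 𝕜 (insert y s)) : ∃ p ∈ convexHull 𝕜 s, Wbtw 𝕜 y x p := by
  rcases s.eq_empty_or_nonempty with rfl | hs
  · simp [hxy] at hx
  rw [convexHull_insert hs, mem_convexJoin] at hx
  obtain ⟨_, rfl, p, hp, hxp⟩ := hx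
  exact ⟨p, hp, mem_segment_iff_wbtw.1 hxp⟩

theorem mem_convexHull_union_of_mem_convexHull_insert {s t : Set E} {x y : E} (hxy : x ≠ y)
    (hx : x ∈ convexHull 𝕜 (insert y s)) (hy : y ∈ convexHull 𝕜 (insert x t)) :
    x ∈ convexHull 𝕜 (s ∪ t) := by
  obtain ⟨p, hp, hyxp⟩ := exists_wbtw_of_mem_convexHull_insert hxy hx
  obtain ⟨q, hq, hxyq⟩ := exists_wbtw_of_mem_convexHull_insert hxy.symm hy
  have hpxq : Wbtw 𝕜 p x q := hyxp.symm.trans_expand_left hxyq hxy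
  exact (convex_convexHull 𝕜 _).segment_subset (convexHull_mono Set.subset_union_left hp)
    (convexHull_mono Set.subset_union_right hq) (mem_segment_iff_wbtw.2 hpxq)

theorem exists_subset_card_le_card_mul_finrank_subset_convexHull [FiniteDimensional 𝕜 E]
    [DecidableEq E] {A P : Finset E} (hP : 1 < #P) (hPA : (P : Set E) ⊆ convexHull 𝕜 ↑A) :
    ∃ B ⊆ A, #B ≤ #P * Module.finrank 𝕜 E ∧ (P : Set E) ⊆ convexHull 𝕜 ↑B := by
  obtain ⟨p₁, hp₁, p₂, hp₂, hne⟩ := one_lt_card.1 hP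
  let partner : E → E := fun p ↦ if p = p₁ then p₂ else p₁
  have hsmall : ∀ p ∈ P, ∃ S ⊆ A, #S ≤ Module.finrank 𝕜 E ∧
      p ∈ convexHull 𝕜 (insert (partner p) (S : Set E)) := fun p hp ↦
    exists_subset_card_le_finrank_mem_convexHull_insert _ A
      (convexHull_mono (Set.subset_insert _ _) (hPA hp))
  choose! S hSA hScard hS using hsmall
  have hSB : ∀ p ∈ P, (S p : Set E) ⊆ ↑(P.biUnion S) := fun p hp ↦
    coe_subset.2 (subset_biUnion_of_mem S hp)
  have hpair : ∀ {p p'}, p ∈ P → p' ∈ P → p ≠ p' → p ∈ convexHull 𝕜 (insert p' (S p : Set E)) →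
      p' ∈ convexHull 𝕜 (insert p (S p' : Set E)) → p ∈ convexHull 𝕜 ↑(P.biUnion S) :=
    fun hp hp' hpp' hpS hp'S ↦ convexHull_mono (Set.union_subset (hSB _ hp) (hSB _ hp'))
      (mem_convexHull_union_of_mem_convexHull_insert hpp' hpS hp'S)
  have hS₁ : p₁ ∈ convexHull 𝕜 (insert p₂ (S p₁ : Set E)) := by simpa [partner] using hS p₁ hp₁
  have hS₂ : p₂ ∈ convexHull 𝕜 (insert p₁ (S p₂ : Set E)) := by
    simpa [partner, hne.symm] using hS p₂ hp₂
  have hpartner : ∀ p, partner p ∈ convexHull 𝕜 ↑(P.biUnion S) := fun p ↦ by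
    unfold partner
    split_ifs
    exacts [hpair hp₂ hp₁ hne.symm hS₂ hS₁, hpair hp₁ hp₂ hne hS₁ hS₂]
  refine ⟨P.biUnion S, biUnion_subset.2 hSA, card_biUnion_le_card_mul _ _ _ hScard,
    fun p hp ↦ convexHull_min ?_ (convex_convexHull 𝕜 _) (hS p hp)⟩
  exact Set.insert_subset (hpartner p) ((hSB p hp).trans (subset_convexHull 𝕜 _))

end Caratheodory

theorem exists_pairwise_disjoint_fin_family {α : Type*} [DecidableEq α] (Q : Finset α → Prop)
    (s j : ℕ) (h : ∀ U : Finset α, #U + s ≤ j * s → ∃ B, Disjoint B U ∧ #B ≤ s ∧ Q B) :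
    ∃ 𝒜 : Fin j → Finset α, Pairwise (Disjoint on 𝒜) ∧ ∀ i, #(𝒜 i) ≤ s ∧ Q (𝒜 i) := by
  induction j with
  | zero => exact ⟨Fin.elim0, fun i ↦ i.elim0, fun i ↦ i.elim0⟩
  | succ j ih =>
    obtain ⟨𝒜, hdisj, h𝒜⟩ := ih fun U hU ↦ h U (by rw [Nat.succ_mul]; omega)
    let U := univ.biUnion 𝒜
    have hsub : ∀ i, 𝒜 i ⊆ U := fun i ↦ subset_biUnion_of_mem 𝒜 (mem_univ i)
    have hU : #U ≤ j * s := by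
      simpa using card_biUnion_le_card_mul univ 𝒜 s fun i _ ↦ (h𝒜 i).1
    obtain ⟨B, hBU, hB⟩ := h U (by rw [Nat.succ_mul]; omega)
    refine ⟨Fin.cons B 𝒜, fun i i' hii' ↦ ?_, Fin.cases hB h𝒜⟩
    induction i using Fin.cases <;> induction i' using Fin.cases
    · exact absurd rfl hii'
    · simpa [onFun] using hBU.mono_right (hsub _)
    · simpa [onFun] using (hBU.mono_right (hsub _)).symm
    · simpa [onFun] using hdisj fun h ↦ hii' (congrArg _ h)

section Depth

variable {d : ℕ}

def HasDepthAtLeast (A P : Finset (Fin d → ℝ)) (a : ℕ) : Prop :=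
  ∀ (v : Fin d → ℝ) (c : ℝ), v ≠ 0 → ∀ p ∈ P, (∑ i, v i * p i ≤ c) →
    a ≤ ((A : Set (Fin d → ℝ)) ∩ {x : Fin d → ℝ | ∑ i, v i * x i ≤ c}).ncard

theorem exists_halfspace_separating (hd : 0 < d) {s : Set (Fin d → ℝ)} (hs : Convex ℝ s)
    (hsc : IsClosed s) {p : Fin d → ℝ} (hp : p ∉ s) :
    ∃ v : Fin d → ℝ, v ≠ 0 ∧ ∃ c : ℝ, ∑ i, v i * p i ≤ c ∧ ∀ x ∈ s, c < ∑ i, v i * x i := by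
  obtain ⟨f, u, hfp, hfs⟩ := geometric_hahn_banach_point_closed hs hsc hp
  let v : Fin d → ℝ := fun i ↦ f fun j ↦ if i = j then 1 else 0
  have hf : ∀ x, f x = ∑ i, v i * x i := fun x ↦ by
    simpa [mul_comm] using LinearMap.pi_apply_eq_sum_univ (f : (Fin d → ℝ) →ₗ[ℝ] ℝ) x
  by_cases hv : v = 0
  · have hs : s = ∅ := Set.eq_empty_of_forall_notMem fun x hx ↦ by
      have := hfs x hx
      simp only [hf, hv, Pi.zero_apply, zero_mul, sum_const_zero] at hfp this
      linarith
    refine ⟨fun _ ↦ 1, fun h ↦ one_ne_zero (congrFun h ⟨0, hd⟩), ∑ i, p i, by simp, ?_⟩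
    simp [hs]
  · exact ⟨v, hv, u, hf p ▸ hfp.le, fun x hx ↦ hf x ▸ hfs x hx⟩

variable {A P : Finset (Fin d → ℝ)} {a b : ℕ}

theorem HasDepthAtLeast.mono (h : HasDepthAtLeast A P a) (hba : b ≤ a) :
    HasDepthAtLeast A P b :=
  fun v c hv p hp hpc ↦ hba.trans (h v c hv p hp hpc)

theorem HasDepthAtLeast.sdiff [DecidableEq (Fin d → ℝ)] {U : Finset (Fin d → ℝ)}
    (h : HasDepthAtLeast A P (a + #U)) : HasDepthAtLeast (A \ U) P a := by
  intro v c hv p hp hpc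
  have hdepth := h v c hv p hp hpc
  set H := {x : Fin d → ℝ | ∑ i, v i * x i ≤ c}
  have hcover : (A : Set (Fin d → ℝ)) ∩ H ⊆ (↑(A \ U) ∩ H) ∪ ↑U := by
    rintro x ⟨hxA, hxH⟩
    by_cases hxU : x ∈ U
    · exact Or.inr hxU
    · exact Or.inl ⟨by simp [hxA, hxU], hxH⟩
  have := (Set.ncard_le_ncard hcover ((A \ U).finite_toSet.inter_of_left H |>.union
    U.finite_toSet)).trans (Set.ncard_union_le _ _)
  rw [Set.ncard_coe_finset] at this
  omega

theorem HasDepthAtLeast.subset_convexHull (hd : 0 < d) (h : HasDepthAtLeast A P 1) :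
    (P : Set (Fin d → ℝ)) ⊆ convexHull ℝ ↑A := by
  intro p hp
  by_contra hpA
  obtain ⟨v, hv, c, hpc, hAc⟩ := exists_halfspace_separating hd (convex_convexHull ℝ _)
    (A.finite_toSet.isClosed_convexHull (𝕜 := ℝ)) hpA
  obtain ⟨x, hxA, hxc⟩ :=
    Set.nonempty_of_ncard_ne_zero (Nat.one_le_iff_ne_zero.1 (h v c hv p hp hpc))
  exact (hAc x (_root_.subset_convexHull ℝ _ hxA)).not_ge hxc

end Depth

/-- inductive step of the Tverberg partition construction, case `k ≥ 2`:
if the `k`-point set `P` has depth at least `(m-1)kd + 1` with respect to `A`, then for every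
`j ≤ m` there are `j` pairwise disjoint subsets of `A`, each of size at most `kd`, whose
convex hulls all contain `P`. -/
theorem tverberg_inductive_step (d m k : ℕ) (hk : 2 ≤ k)
    (A P : Finset (Fin d → ℝ)) (hPcard : P.card = k)
    (hdepth : ∀ (v : Fin d → ℝ) (c : ℝ), v ≠ 0 → ∀ p ∈ P, (∑ i, v i * p i ≤ c) →
      (m - 1) * k * d + 1 ≤
        ((A : Set (Fin d → ℝ)) ∩ {x : Fin d → ℝ | ∑ i, v i * x i ≤ c}).ncard) :
    ∀ j ≤ m, ∃ 𝒜 : Fin j → Finset (Fin d → ℝ),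
      (∀ i, 𝒜 i ⊆ A) ∧ (∀ i i', i ≠ i' → Disjoint (𝒜 i) (𝒜 i')) ∧
      (∀ i, (𝒜 i).card ≤ k * d) ∧
      ∀ i, ↑P ⊆ convexHull ℝ ((𝒜 i : Set (Fin d → ℝ))) := by
  classical
  have hd : 0 < d := Nat.pos_of_ne_zero <| by
    rintro rfl
    have := card_le_one_of_subsingleton P
    omega
  intro j hj
  obtain ⟨𝒜, hdisj, h𝒜⟩ := exists_pairwise_disjoint_fin_family
    (fun B ↦ B ⊆ A ∧ (P : Set (Fin d → ℝ)) ⊆ convexHull ℝ ↑B) (k * d) j fun U hU ↦ by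
      have hjm : j * (k * d) ≤ m * (k * d) := Nat.mul_le_mul_right _ hj
      have hm : (m - 1) * k * d = m * (k * d) - k * d := by rw [mul_assoc, Nat.sub_one_mul]
      have hPAU : (P : Set (Fin d → ℝ)) ⊆ convexHull ℝ ↑(A \ U) :=
        (HasDepthAtLeast.mono (b := 1 + #U) hdepth (by omega)).sdiff
          |>.subset_convexHull hd
      obtain ⟨B, hBAU, hBcard, hPB⟩ :=
        exists_subset_card_le_card_mul_finrank_subset_convexHull (by omega) hPAU
      rw [hPcard, Module.finrank_fin_fun] at hBcard
      exact ⟨B, disjoint_of_subset_left hBAU sdiff_disjoint, hBcard, hBAU.trans sdiff_subset, hPB⟩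
  exact ⟨𝒜, fun i ↦ (h𝒜 i).2.1, hdisj, fun i ↦ (h𝒜 i).1, fun i ↦ (h𝒜 i).2.2⟩
end

section
/- Helly number of Z^d (Doignon's theorem): If F is a finite family of convex sets in R^d such that every subfamily of at most 2^d sets has a common point in Z^d, then ⋂F contains a point of Z^d. -/
/-!
Among more than `2^d` integer points two are congruent modulo 2, so their midpoint is again an
integer point. By induction on the size of the family we may pick integer points
`y i ∈ ⋂_{j ≠ i} F j`. If no `y i` lies in `F i`, moving one of the two congruent points to their
midpoint, and then moving its partner to the common point produced by induction, keeps such a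
configuration while removing an integer point from the convex hull of the `y i`; so induction on
the number of integer points in that hull finishes the proof.
-/

open Set

theorem Convex.mem_of_mem_convexHull_insert_midpoint {E : Type*} [AddCommGroup E] [Module ℝ E]
    {T : Set E} (hT : Convex ℝ T) {p q : E} (hq : q ∈ T)
    (hp : p ∈ convexHull ℝ (insert (midpoint ℝ p q) T)) : p ∈ T := by
  rw [convexHull_insert ⟨q, hq⟩, hT.convexHull_eq, mem_convexJoin] at hp
  obtain ⟨_, rfl, t, ht, α, β, hα, hβ, hαβ, hpe⟩ := hp
  -- `p = α (p + q)/2 + β t` rearranges to a convex combination of `q` and `t`.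
  have hs : 0 < 1 - α / 2 := by linarith
  have hcomb : (1 - α / 2) • p = (α / 2) • q + β • t := by
    rw [midpoint_eq_smul_add, invOf_eq_inv] at hpe
    linear_combination (norm := module) -hpe
  have hp' : p = (1 - α / 2)⁻¹ • ((α / 2) • q + β • t) := by
    rw [← hcomb, smul_smul, inv_mul_cancel₀ hs.ne', one_smul]
  rw [hp', smul_add, smul_smul, smul_smul]
  exact hT hq ht (by positivity) (by positivity)
    (by rw [← mul_add, inv_mul_eq_one₀ hs.ne']; linarith)

section

variable {ι E : Type*} [DecidableEq ι] [AddCommGroup E] [Module ℝ E]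

theorem convexHull_range_update_subset {y : ι → E} {x : E} (hx : x ∈ convexHull ℝ (range y))
    (a : ι) : convexHull ℝ (range (Function.update y a x)) ⊆ convexHull ℝ (range y) :=
  convexHull_min (range_subset_iff.2 <|
    (Function.forall_update_iff y fun _ v => v ∈ convexHull ℝ (range y)).2
      ⟨hx, fun j _ => subset_convexHull ℝ _ (mem_range_self j)⟩) (convex_convexHull ℝ _)

theorem notMem_convexHull_range_update {S : Set E} (hS : Convex ℝ S) {y : ι → E} {a : ι}
    (hya : y a ∉ S) (hy : ∀ j ≠ a, y j ∈ S) {q x : E} (hq : q ∈ S)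
    (hx : x ∈ convexHull ℝ (insert (midpoint ℝ (y a) q) S)) :
    y a ∉ convexHull ℝ (range (Function.update y a x)) := fun h =>
  hya <| hS.mem_of_mem_convexHull_insert_midpoint hq <| convexHull_min
    (range_subset_iff.2 <|
      (Function.forall_update_iff y fun _ v => v ∈ convexHull ℝ (insert (midpoint ℝ (y a) q) S)).2
      ⟨hx, fun j hj => subset_convexHull ℝ _ (mem_insert_of_mem _ (hy j hj))⟩)
    (convex_convexHull ℝ _) h

end

theorem forall_ne_update_mem {ι α : Type*} [DecidableEq ι] {F : ι → Set α} {y : ι → α}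
    (hy : ∀ i j, j ≠ i → y j ∈ F i) {a : ι} {x : α} (hx : ∀ i ≠ a, x ∈ F i) :
    ∀ i j, j ≠ i → Function.update y a x j ∈ F i := by
  intro i j hji
  rcases eq_or_ne j a with rfl | hja
  · simpa using hx i hji.symm
  · simpa [hja] using hy i j hji

def integerPoints (κ : Type*) : Set (κ → ℝ) := {x | ∀ i, ∃ z : ℤ, x i = z}

section

variable {κ : Type*} [Fintype κ]

theorem Bornology.IsBounded.finite_inter_integerPoints {K : Set (κ → ℝ)}
    (hK : Bornology.IsBounded K) : (K ∩ integerPoints κ).Finite := by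
  obtain ⟨C, hC⟩ := hK.exists_norm_le
  refine (Finite.pi fun _ => (finite_Icc ⌈-C⌉ ⌊C⌋).image Int.cast).subset ?_
  rintro x ⟨hxK, hx⟩ i -
  obtain ⟨z, hz⟩ := hx i
  have hxi : |x i| ≤ C := (norm_le_pi_norm x i).trans (hC x hxK)
  rw [hz] at hxi
  exact ⟨z, ⟨Int.ceil_le.2 (neg_le_of_abs_le hxi), Int.le_floor.2 (le_of_abs_le hxi)⟩, hz.symm⟩

theorem exists_ne_midpoint_mem_integerPoints {ι : Type*} [Fintype ι]
    (hcard : 2 ^ Fintype.card κ < Fintype.card ι) {y : ι → κ → ℝ}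
    (hy : ∀ j, y j ∈ integerPoints κ) :
    ∃ a b, a ≠ b ∧ midpoint ℝ (y a) (y b) ∈ integerPoints κ := by
  classical
  choose z hz using hy
  obtain ⟨a, b, hab, hpar⟩ := Fintype.exists_ne_map_eq_of_card_lt
    (fun j i => (z j i : ZMod 2)) (by simpa using hcard)
  refine ⟨a, b, hab, fun i => ?_⟩
  obtain ⟨m, hm⟩ := (ZMod.intCast_eq_intCast_iff_dvd_sub _ _ 2).1 (congrFun hpar i)
  refine ⟨z a i + m, ?_⟩
  have hmR : (z b i : ℝ) - z a i = 2 * m := by exact_mod_cast hm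
  rw [midpoint_eq_smul_add, invOf_eq_inv, Pi.smul_apply, Pi.add_apply, hz, hz, smul_eq_mul]
  push_cast
  linarith

theorem ncard_inter_integerPoints_lt {K K' : Set (κ → ℝ)} (hK : Bornology.IsBounded K)
    (hsub : K' ⊆ K) {x : κ → ℝ} (hxK : x ∈ K) (hxZ : x ∈ integerPoints κ) (hxK' : x ∉ K') :
    (K' ∩ integerPoints κ).ncard < (K ∩ integerPoints κ).ncard :=
  ncard_lt_ncard (ssubset_of_subset_not_subset (inter_subset_inter_left _ hsub)
    fun h => hxK' (h ⟨hxK, hxZ⟩).1) hK.finite_inter_integerPoints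

theorem exists_mem_integerPoints_forall_mem_of_forall_ne_mem {ι : Type*} [Fintype ι]
    (hcard : 2 ^ Fintype.card κ < Fintype.card ι) {F : ι → Set (κ → ℝ)}
    (hF : ∀ i, Convex ℝ (F i)) {y : ι → κ → ℝ} (hyZ : ∀ j, y j ∈ integerPoints κ)
    (hy : ∀ i j, j ≠ i → y j ∈ F i) :
    ∃ w ∈ convexHull ℝ (range y) ∩ integerPoints κ, ∀ i, w ∈ F i := by
  classical
  induction hn : (convexHull ℝ (range y) ∩ integerPoints κ).ncard using Nat.strong_induction_on
    generalizing F y with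
  | _ n ih =>
  by_cases hfix : ∃ i, y i ∈ F i
  · obtain ⟨i, hi⟩ := hfix
    refine ⟨y i, ⟨subset_convexHull ℝ _ (mem_range_self i), hyZ i⟩, fun j => ?_⟩
    rcases eq_or_ne i j with rfl | hij
    · exact hi
    · exact hy j i hij
  push Not at hfix
  have hbdd : Bornology.IsBounded (convexHull ℝ (range y)) :=
    ((finite_range y).isCompact_convexHull ℝ).isBounded
  have hmem : ∀ j, y j ∈ convexHull ℝ (range y) := fun j => subset_convexHull ℝ _ (mem_range_self j)
  obtain ⟨a, b, hab, hmZ⟩ := exists_ne_midpoint_mem_integerPoints hcard hyZ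
  set m := midpoint ℝ (y a) (y b)
  have hm : m ∈ convexHull ℝ (range y) :=
    (convex_convexHull ℝ _).segment_subset (hmem a) (hmem b) (midpoint_mem_segment _ _)
  have hmF : ∀ i, i ≠ a → i ≠ b → m ∈ F i := fun i hia hib =>
    (hF i).segment_subset (hy i a hia.symm) (hy i b hib.symm) (midpoint_mem_segment _ _)
  -- Move `y a` to the lattice point `m`; `F b` need not contain `m`, so it is enlarged.
  set F₁ := Function.update F b (convexHull ℝ (insert m (F b)))
  have hF₁ : ∀ i, Convex ℝ (F₁ i) :=
    (Function.forall_update_iff F fun _ s => Convex ℝ s).2 ⟨convex_convexHull ℝ _, fun i _ => hF i⟩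
  have hFF₁ : ∀ i, F i ⊆ F₁ i := (Function.forall_update_iff F fun i s => F i ⊆ s).2
    ⟨(subset_insert _ _).trans (subset_convexHull ℝ _), fun _ _ => subset_rfl⟩
  have hmF₁ : ∀ i ≠ a, m ∈ F₁ i := by
    intro i hia
    rcases eq_or_ne i b with rfl | hib
    · simpa [F₁] using subset_convexHull ℝ _ (mem_insert m _)
    · simpa [F₁, hib] using hmF i hia hib
  obtain ⟨w, ⟨hwY, hwZ⟩, hwF⟩ := ih _
    (hn ▸ ncard_inter_integerPoints_lt hbdd (convexHull_range_update_subset hm a) (hmem a) (hyZ a)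
      (notMem_convexHull_range_update (hF a) (hfix a) (fun j hj => hy a j hj) (hy a b hab.symm)
        (subset_convexHull ℝ _ (mem_insert _ _))))
    hF₁ ((Function.forall_update_iff y fun _ v => v ∈ integerPoints κ).2 ⟨hmZ, fun j _ => hyZ j⟩)
    (forall_ne_update_mem (fun i j hji => hFF₁ i (hy i j hji)) hmF₁) rfl
  -- Move `y b` to `w`, which satisfies every constraint except possibly `F b`.
  have hwF' : ∀ i ≠ b, w ∈ F i := fun i hib => by simpa [F₁, hib] using hwF i
  have hsub := convexHull_range_update_subset (convexHull_range_update_subset hm a hwY) b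
  obtain ⟨w', ⟨hw'Y, hw'Z⟩, hw'F⟩ := ih _
    (hn ▸ ncard_inter_integerPoints_lt hbdd hsub (hmem b) (hyZ b)
      (notMem_convexHull_range_update (hF b) (hfix b) (fun j hj => hy b j hj) (hy b a hab)
        (by simpa [F₁, midpoint_comm] using hwF b)))
    hF ((Function.forall_update_iff y fun _ v => v ∈ integerPoints κ).2 ⟨hwZ, fun j _ => hyZ j⟩)
    (forall_ne_update_mem hy hwF') rfl
  exact ⟨w', ⟨hsub hw'Y, hw'Z⟩, hw'F⟩

theorem exists_mem_integerPoints_forall_mem {ι : Type*} {F : ι → Set (κ → ℝ)}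
    (hF : ∀ i, Convex ℝ (F i))
    (h : ∀ s : Finset ι, s.card ≤ 2 ^ Fintype.card κ → ∃ x ∈ integerPoints κ, ∀ i ∈ s, x ∈ F i)
    (s : Finset ι) : ∃ x ∈ integerPoints κ, ∀ i ∈ s, x ∈ F i := by
  classical
  induction s using Finset.strongInduction with
  | H s ih =>
  by_cases hs : s.card ≤ 2 ^ Fintype.card κ
  · exact h s hs
  have hy : ∀ i : s, ∃ x ∈ integerPoints κ, ∀ j ∈ s.erase i, x ∈ F j := fun i =>
    ih _ (Finset.erase_ssubset i.2)
  choose y hyZ hy using hy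
  obtain ⟨w, ⟨-, hwZ⟩, hw⟩ := exists_mem_integerPoints_forall_mem_of_forall_ne_mem
    (ι := s) (by simpa using not_le.1 hs) (fun i => hF i) hyZ
    fun i j hji => hy j i (Finset.mem_erase.2 ⟨fun h => hji (Subtype.ext h).symm, i.2⟩)
  exact ⟨w, hwZ, fun i hi => hw ⟨i, hi⟩⟩

end

/-- Doignon's theorem: if every subfamily of at most `2^d` members of a finite
family of convex sets in `ℝ^d` has a common integer point, then the whole family has a common
integer point. -/
theorem doignon (d t : ℕ) (F : Fin t → Set (Fin d → ℝ)) (hF : ∀ i, Convex ℝ (F i))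
    (h : ∀ G : Finset (Fin t), G.card ≤ 2 ^ d →
      ∃ x : Fin d → ℝ, (∀ i, ∃ z : ℤ, x i = (z : ℝ)) ∧ ∀ i ∈ G, x ∈ F i) :
    ∃ x : Fin d → ℝ, (∀ i, ∃ z : ℤ, x i = (z : ℝ)) ∧ ∀ i, x ∈ F i := by
  obtain ⟨x, hxZ, hxF⟩ := exists_mem_integerPoints_forall_mem hF
    (fun G hG => h G (by simpa using hG)) Finset.univ
  exact ⟨x, hxZ, fun i => hxF i (Finset.mem_univ i)⟩
end
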